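/- For every pushdown automaton M there is a guarded sequential recursive specification with propositional signals and conditions (over TSP⨟ extended with φ :→ p and ψ ∧→ p, with an effect function having the reset property) whose process graph is bisimilar to the process graph of M, using one propositional variable state(s) per state s of M, identifiers X, X_ε and X_d (d ∈ D), and the relation matching (s, x) with state(s) ∧→ (α_x ⨟ X_ε). -/
import Mathlib


structure LTS (S : Type*) (A : Type*) where
  Tr : S → A → S → Prop
  Acc : S → Prop

/-- A bisimulation between the states of two labelled transition systems. -/
def IsBisimulation2 {S T A : Type*} (L : LTS S A) (L' : LTS T A)
    (R : S → T → Prop) : Prop :=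
  ∀ s t, R s t →
    (∀ a s', L.Tr s a s' → ∃ t', L'.Tr t a t' ∧ R s' t') ∧
    (∀ a t', L'.Tr t a t' → ∃ s', L.Tr s a s' ∧ R s' t') ∧
    (L.Acc s ↔ L'.Acc t)

def Bisimilar2 {S T A : Type*} (L : LTS S A) (L' : LTS T A) (s : S) (t : T) : Prop :=
  ∃ R, IsBisimulation2 L L' R ∧ R s t
/-- A pushdown automaton (labels `A` are understood to include τ; `none` in the
data component stands for an ε (empty-stack) transition). -/
structure PDA (S A D : Type*) where
  Tr : Set (S × A × Option D × List D × S)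
  init : S
  final : Set S

/-- Transitions of the process graph of a PDA. -/
def PDA.step {S A D : Type*} (M : PDA S A D) : S × List D → A → S × List D → Prop :=
  fun st a st' =>
    match st with
    | (s, []) => (s, a, none, st'.2, st'.1) ∈ M.Tr
    | (s, d :: x) => ∃ y, st'.2 = y ++ x ∧ (s, a, some d, y, st'.1) ∈ M.Tr

/-- The process graph of a PDA: acceptance by final state. -/
def PDA.lts {S A D : Type*} (M : PDA S A D) : LTS (S × List D) A :=
  ⟨M.step, fun st => st.1 ∈ M.final⟩
abbrev Val (PVar : Type) := PVar → Bool
abbrev Prp (PVar : Type) := Val PVar → Bool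

/-- Sequential process expressions with guarded commands `φ :→ p`, root-signal
emission `ψ ∧→ p`, sequencing, NA and identifiers from `V`. -/
inductive SExpr (A PVar V : Type) where
  | zero | one
  | act (a : A) (p : SExpr A PVar V)
  | add (p q : SExpr A PVar V)
  | seq (p q : SExpr A PVar V)
  | na (p : SExpr A PVar V)
  | guard (φ : Prp PVar) (p : SExpr A PVar V)
  | signal (φ : Prp PVar) (p : SExpr A PVar V)
  | var (X : V)

/-- Guardedness: every identifier occurrence is within the scope of an action
prefix. -/
inductive SGuarded {A PVar V : Type} : SExpr A PVar V → Prop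
  | zero : SGuarded .zero
  | one : SGuarded .one
  | act (a p) : SGuarded (SExpr.act a p)
  | add {p q} : SGuarded p → SGuarded q → SGuarded (SExpr.add p q)
  | seq {p q} : SGuarded p → SGuarded q → SGuarded (SExpr.seq p q)
  | na {p} : SGuarded p → SGuarded (SExpr.na p)
  | guard {φ p} : SGuarded p → SGuarded (SExpr.guard φ p)
  | signal {φ p} : SGuarded p → SGuarded (SExpr.signal φ p)

/-- `Ac`, `Co` and `T` are, respectively, the valuation-indexed acceptance
predicate `⟨p,v⟩↓`, consistency predicate `Cons⟨p,v⟩` and transition relation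
`⟨p,v⟩ →a ⟨q,v'⟩` generated by the operational rules (with the consistency
side conditions and the non-transparent rule for sequencing). -/
def IsSem {A PVar V : Type} (Δ : V → SExpr A PVar V)
    (effect : A → Val PVar → Val PVar)
    (Ac Co : SExpr A PVar V → Val PVar → Prop)
    (T : SExpr A PVar V → Val PVar → A → SExpr A PVar V → Val PVar → Prop) :
    Prop :=
  (∀ p v, Ac p v ↔
    match p with
    | .zero => False
    | .one => True
    | .act _ _ => False
    | .add p q => (Ac p v ∧ Co q v) ∨ (Ac q v ∧ Co p v)
    | .seq p q => Ac p v ∧ Ac q v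
    | .na _ => False
    | .guard φ p => φ v = true ∧ Ac p v
    | .signal φ p => φ v = true ∧ Ac p v
    | .var X => Ac (Δ X) v) ∧
  (∀ p v, Co p v ↔
    match p with
    | .zero => True
    | .one => True
    | .act _ _ => True
    | .add p q => Co p v ∧ Co q v
    | .seq p q => (Co p v ∧ ¬ Ac p v) ∨ (Ac p v ∧ Co q v)
    | .na p => Co p v
    | .guard _ p => Co p v
    | .signal φ p => φ v = true ∧ Co p v
    | .var X => Co (Δ X) v) ∧
  (∀ p v a q v', T p v a q v' ↔
    match p with
    | .zero => False
    | .one => False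
    | .act b r => a = b ∧ q = r ∧ v' = effect a v ∧ Co r v'
    | .add r s => (T r v a q v' ∧ Co s v) ∨ (T s v a q v' ∧ Co r v)
    | .seq r s =>
        (∃ r', T r v a r' v' ∧ q = SExpr.seq r' s ∧ Co (SExpr.seq r' s) v') ∨
        (Ac r v ∧ (∀ b r' w, ¬ T r v b r' w) ∧ T s v a q v')
    | .na r => T r v a q v'
    | .guard φ r => φ v = true ∧ T r v a q v'
    | .signal φ r => φ v = true ∧ T r v a q v'
    | .var X => T (Δ X) v a q v')

/-- The valuation-free process graph of a specification with signals and
conditions (Definition 7.7): `p →a q` iff the root signal of `p` is not false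
and for all consistent valuations `v`, `⟨p,v⟩ →a ⟨q, effect(a,v)⟩`; similarly
for acceptance. -/
def vfLTS {A PVar V : Type} (effect : A → Val PVar → Val PVar)
    (Ac Co : SExpr A PVar V → Val PVar → Prop)
    (T : SExpr A PVar V → Val PVar → A → SExpr A PVar V → Val PVar → Prop) :
    LTS (SExpr A PVar V) A :=
  ⟨fun p a q => (∃ v, Co p v) ∧ ∀ v, Co p v → T p v a q (effect a v),
   fun p => (∃ v, Co p v) ∧ ∀ v, Co p v → Ac p v⟩

section Spec18
open Classical

variable {S A D : Type} (M : PDA S A D)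

/-- stack symbols that can be popped. -/
def PopSet : Set D := {d | ∃ s a y t, (s, a, some d, y, t) ∈ M.Tr}

/-- identifiers of the specification. -/
abbrev VS (M : PDA S A D) : Type := Option (Option ↥(PopSet M)) ⊕ Unit

abbrev ES (M : PDA S A D) := SExpr A S (VS M)

def vX0 : VS M := Sum.inl none
def vXe : VS M := Sum.inl (some none)
def vXd (d : ↥(PopSet M)) : VS M := Sum.inl (some (some d))
def vY : VS M := Sum.inr ()

/-- "state is w (or everything false)" -/
noncomputable def sg (w : S) : Prp S := fun v => v w || decide (∀ s, v s = false)
noncomputable def phiF : Prp S :=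
  fun v => decide (∃ s ∈ M.final, v s = true) || decide (∀ s, v s = false)
noncomputable def chi : Prp S := fun v => decide (∀ s, v s = true)

noncomputable def Tl : List D → ES M
  | [] => .var (vXe M)
  | d :: x => if h : d ∈ PopSet M then .seq (.var (vXd M ⟨d, h⟩)) (Tl x) else .var (vY M)

noncomputable def Mde : List D → ES M
  | [] => .one
  | d :: x => if h : d ∈ PopSet M then .seq (.var (vXd M ⟨d, h⟩)) (Mde x) else .var (vY M)

noncomputable def sm0 (tr : S × A × Option D × List D × S) : ES M :=
  if tr.1 = M.init ∧ tr.2.2.1 = none then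
    .act tr.2.1 (.signal (sg tr.2.2.2.2) (Tl M tr.2.2.2.1))
  else .zero

noncomputable def smE (tr : S × A × Option D × List D × S) : ES M :=
  if tr.2.2.1 = none then
    .guard (sg tr.1) (.act tr.2.1 (.signal (sg tr.2.2.2.2) (Tl M tr.2.2.2.1)))
  else .zero

noncomputable def smD (d : D) (tr : S × A × Option D × List D × S) : ES M :=
  if tr.2.2.1 = some d then
    .guard (sg tr.1) (.act tr.2.1 (.signal (sg tr.2.2.2.2) (Mde M tr.2.2.2.1)))
  else .zero

noncomputable def smY (tr : S × A × Option D × List D × S) : ES M :=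
  .add (.guard chi (.act tr.2.1 .one)) (.guard (fun v => !chi v) (.act tr.2.1 .zero))

def sumL : List (ES M) → ES M → ES M := fun l b => l.foldr .add b

variable (hfin : M.Tr.Finite)

noncomputable def trL : List (S × A × Option D × List D × S) := hfin.toFinset.toList

lemma mem_trL {tr} : tr ∈ trL M hfin ↔ tr ∈ M.Tr := by
  simp [trL, Set.Finite.mem_toFinset]

noncomputable def Del : VS M → ES M
  | .inl none => sumL M ((trL M hfin).map (sm0 M)) (if M.init ∈ M.final then .one else .zero)
  | .inl (some none) => sumL M ((trL M hfin).map (smE M)) (.guard (phiF M) .one)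
  | .inl (some (some d)) => sumL M ((trL M hfin).map (smD M d.val)) (.guard (phiF M) .one)
  | .inr _ => sumL M ((trL M hfin).map (smY M)) (.guard (phiF M) .one)

lemma sumL_guarded {l : List (ES M)} {b : ES M} (hl : ∀ e ∈ l, SGuarded e)
    (hb : SGuarded b) : SGuarded (sumL M l b) := by
  induction l with
  | nil => exact hb
  | cons e l ih =>
      exact SGuarded.add (hl e (by simp)) (ih fun e' he' => hl e' (by simp [he']))

lemma Del_guarded (X : VS M) : SGuarded (Del M hfin X) := by
  have h0 : ∀ tr, SGuarded (sm0 M tr) := by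
    intro tr; unfold sm0; split
    · exact SGuarded.act _ _
    · exact SGuarded.zero
  have hE : ∀ tr, SGuarded (smE M tr) := by
    intro tr; unfold smE; split
    · exact SGuarded.guard (SGuarded.act _ _)
    · exact SGuarded.zero
  have hD : ∀ d tr, SGuarded (smD M d tr) := by
    intro d tr; unfold smD; split
    · exact SGuarded.guard (SGuarded.act _ _)
    · exact SGuarded.zero
  have hY : ∀ tr, SGuarded (smY M tr) := by
    intro tr; exact SGuarded.add (SGuarded.guard (SGuarded.act _ _))
      (SGuarded.guard (SGuarded.act _ _))
  have key : ∀ (f : S × A × Option D × List D × S → ES M), (∀ tr, SGuarded (f tr)) →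
      ∀ e ∈ (trL M hfin).map f, SGuarded e := by
    intro f hf e he
    rcases List.mem_map.1 he with ⟨tr, _, rfl⟩
    exact hf tr
  rcases X with (_ | _ | d) | u
  · exact sumL_guarded M (key _ h0) (by split <;> constructor)
  · exact sumL_guarded M (key _ hE) (SGuarded.guard SGuarded.one)
  · exact sumL_guarded M (key _ (hD d.val)) (SGuarded.guard SGuarded.one)
  · exact sumL_guarded M (key _ hY) (SGuarded.guard SGuarded.one)

end Spec18
section Sem18
open Classical

variable {S A D : Type} {M : PDA S A D} {hfin : M.Tr.Finite}
variable {effect : A → Val S → Val S} {Ac Co : ES M → Val S → Prop}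
  {T : ES M → Val S → A → ES M → Val S → Prop}

def vT : Val S := fun _ => true
def vF : Val S := fun _ => false
noncomputable def vI (w : S) : Val S := fun s => decide (s = w)

section Unfold
variable (hsem : IsSem (Del M hfin) effect Ac Co T)
include hsem

lemma acZero (v) : Ac (.zero : ES M) v ↔ False := (hsem.1 _ v).trans Iff.rfl
lemma acOne (v) : Ac (.one : ES M) v ↔ True := (hsem.1 _ v).trans Iff.rfl
lemma acAct (a p v) : Ac (.act a p : ES M) v ↔ False := (hsem.1 _ v).trans Iff.rfl
lemma acAdd (p q v) : Ac (.add p q) v ↔ (Ac p v ∧ Co q v) ∨ (Ac q v ∧ Co p v) :=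
  (hsem.1 _ v).trans Iff.rfl
lemma acSeq (p q v) : Ac (.seq p q) v ↔ Ac p v ∧ Ac q v := (hsem.1 _ v).trans Iff.rfl
lemma acGuard (φ p v) : Ac (.guard φ p) v ↔ φ v = true ∧ Ac p v := (hsem.1 _ v).trans Iff.rfl
lemma acSig (φ p v) : Ac (.signal φ p) v ↔ φ v = true ∧ Ac p v := (hsem.1 _ v).trans Iff.rfl
lemma acVar (X v) : Ac (.var X) v ↔ Ac (Del M hfin X) v := (hsem.1 _ v).trans Iff.rfl

lemma coZero (v) : Co (.zero : ES M) v ↔ True := (hsem.2.1 _ v).trans Iff.rfl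
lemma coOne (v) : Co (.one : ES M) v ↔ True := (hsem.2.1 _ v).trans Iff.rfl
lemma coAct (a p v) : Co (.act a p : ES M) v ↔ True := (hsem.2.1 _ v).trans Iff.rfl
lemma coAdd (p q v) : Co (.add p q) v ↔ Co p v ∧ Co q v := (hsem.2.1 _ v).trans Iff.rfl
lemma coSeq (p q v) : Co (.seq p q) v ↔ (Co p v ∧ ¬ Ac p v) ∨ (Ac p v ∧ Co q v) :=
  (hsem.2.1 _ v).trans Iff.rfl
lemma coGuard (φ p v) : Co (.guard φ p) v ↔ Co p v := (hsem.2.1 _ v).trans Iff.rfl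
lemma coSig (φ p v) : Co (.signal φ p) v ↔ φ v = true ∧ Co p v := (hsem.2.1 _ v).trans Iff.rfl
lemma coVar (X v) : Co (.var X) v ↔ Co (Del M hfin X) v := (hsem.2.1 _ v).trans Iff.rfl

lemma tZero (v a q v') : T (.zero : ES M) v a q v' ↔ False := (hsem.2.2 _ v a q v').trans Iff.rfl
lemma tOne (v a q v') : T (.one : ES M) v a q v' ↔ False := (hsem.2.2 _ v a q v').trans Iff.rfl
lemma tAct (b r v a q v') : T (.act b r) v a q v' ↔
    a = b ∧ q = r ∧ v' = effect a v ∧ Co r v' := (hsem.2.2 _ v a q v').trans Iff.rfl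
lemma tAdd (r s v a q v') : T (.add r s) v a q v' ↔
    (T r v a q v' ∧ Co s v) ∨ (T s v a q v' ∧ Co r v) := (hsem.2.2 _ v a q v').trans Iff.rfl
lemma tSeq (r s v a q v') : T (.seq r s) v a q v' ↔
    (∃ r', T r v a r' v' ∧ q = SExpr.seq r' s ∧ Co (SExpr.seq r' s) v') ∨
    (Ac r v ∧ (∀ b r' w, ¬ T r v b r' w) ∧ T s v a q v') := (hsem.2.2 _ v a q v').trans Iff.rfl
lemma tGuard (φ r v a q v') : T (.guard φ r) v a q v' ↔ φ v = true ∧ T r v a q v' :=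
  (hsem.2.2 _ v a q v').trans Iff.rfl
lemma tSig (φ r v a q v') : T (.signal φ r) v a q v' ↔ φ v = true ∧ T r v a q v' :=
  (hsem.2.2 _ v a q v').trans Iff.rfl
lemma tVar (X v a q v') : T (.var X) v a q v' ↔ T (Del M hfin X) v a q v' :=
  (hsem.2.2 _ v a q v').trans Iff.rfl

end Unfold
end Sem18
section Sem18b
open Classical

variable {S A D : Type} {M : PDA S A D} {hfin : M.Tr.Finite}
variable {effect : A → Val S → Val S} {Ac Co : ES M → Val S → Prop}
  {T : ES M → Val S → A → ES M → Val S → Prop}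
variable (hsem : IsSem (Del M hfin) effect Ac Co T)
variable (hreset : ∀ a v, effect a v = fun _ => true)

lemma sg_vT (w : S) : sg w vT = true := by simp [sg, vT]
lemma sg_vF (w : S) : sg w vF = true := by simp [sg, vF]
lemma allF_vI (w : S) : ¬ (∀ s, vI w s = false) := by
  intro h; have := h w; simp [vI] at this
lemma sg_vI (s w : S) : sg s (vI w) = true ↔ s = w := by
  simp [sg, vI, allF_vI w, decide_eq_true_eq]
lemma sg_self_vI (w : S) : sg w (vI w) = true := (sg_vI w w).mpr rfl
lemma phiF_vI (w : S) : phiF M (vI w) = true ↔ w ∈ M.final := by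
  simp [phiF, vI, allF_vI w, decide_eq_true_eq]
lemma phiF_mono {w : S} (hw : w ∈ M.final) {v : Val S}
    (hv : v w = true ∨ ∀ s, v s = false) : phiF M v = true := by
  rcases hv with h | h
  · simp [phiF, decide_eq_true_eq]; left; exact ⟨w, hw, h⟩
  · simp [phiF, decide_eq_true_eq]; right; exact h
lemma chi_vT : chi (S := S) vT = true := by simp [chi, vT]
lemma chi_vF (w : S) : chi (S := S) vF = false := by
  have : ¬ (∀ s : S, vF s = true) := fun h => by simpa [vF] using h w
  simp [chi, this]

section WithSem
include hsem

lemma co_sumL {l : List (ES M)} {b : ES M} (hl : ∀ e ∈ l, ∀ v, Co e v)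
    (hb : ∀ v, Co b v) (v) : Co (sumL M l b) v := by
  induction l with
  | nil => exact hb v
  | cons e l ih =>
      exact (coAdd hsem _ _ _).mpr ⟨hl e (by simp) v,
        ih (fun e' he' => hl e' (by simp [he']))⟩

lemma ac_sumL {l : List (ES M)} {b : ES M} (hl : ∀ e ∈ l, ∀ v, Co e v)
    (hb : ∀ v, Co b v) (v) : Ac (sumL M l b) v ↔ (∃ e ∈ l, Ac e v) ∨ Ac b v := by
  induction l with
  | nil => simp [sumL]
  | cons e l ih =>
      have hl' : ∀ e' ∈ l, ∀ v, Co e' v := fun e' he' => hl e' (by simp [he'])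
      rw [show sumL M (e :: l) b = .add e (sumL M l b) from rfl, acAdd hsem]
      simp only [ih hl', List.mem_cons]
      constructor
      · rintro (⟨h, _⟩ | ⟨h, _⟩)
        · exact Or.inl ⟨e, Or.inl rfl, h⟩
        · rcases h with ⟨e', he', h⟩ | h
          · exact Or.inl ⟨e', Or.inr he', h⟩
          · exact Or.inr h
      · rintro (⟨e', (rfl | he'), h⟩ | h)
        · exact Or.inl ⟨h, co_sumL hsem hl' hb v⟩
        · exact Or.inr ⟨Or.inl ⟨e', he', h⟩, hl e (by simp) v⟩
        · exact Or.inr ⟨Or.inr h, hl e (by simp) v⟩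

lemma t_sumL {l : List (ES M)} {b : ES M} (hl : ∀ e ∈ l, ∀ v, Co e v)
    (hb : ∀ v, Co b v) (v a q v') :
    T (sumL M l b) v a q v' ↔ (∃ e ∈ l, T e v a q v') ∨ T b v a q v' := by
  induction l with
  | nil => simp [sumL]
  | cons e l ih =>
      have hl' : ∀ e' ∈ l, ∀ v, Co e' v := fun e' he' => hl e' (by simp [he'])
      rw [show sumL M (e :: l) b = .add e (sumL M l b) from rfl, tAdd hsem]
      simp only [ih hl', List.mem_cons]
      constructor
      · rintro (⟨h, _⟩ | ⟨h, _⟩)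
        · exact Or.inl ⟨e, Or.inl rfl, h⟩
        · rcases h with ⟨e', he', h⟩ | h
          · exact Or.inl ⟨e', Or.inr he', h⟩
          · exact Or.inr h
      · rintro (⟨e', (rfl | he'), h⟩ | h)
        · exact Or.inl ⟨h, co_sumL hsem hl' hb v⟩
        · exact Or.inr ⟨Or.inl ⟨e', he', h⟩, hl e (by simp) v⟩
        · exact Or.inr ⟨Or.inr h, hl e (by simp) v⟩

lemma co_sm0 (tr) (v) : Co (sm0 M tr) v := by
  unfold sm0; split
  · exact (coAct hsem _ _ _).mpr trivial
  · exact (coZero hsem _).mpr trivial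
lemma co_smE (tr) (v) : Co (smE M tr) v := by
  unfold smE; split
  · exact (coGuard hsem _ _ _).mpr ((coAct hsem _ _ _).mpr trivial)
  · exact (coZero hsem _).mpr trivial
lemma co_smD (d tr) (v) : Co (smD M d tr) v := by
  unfold smD; split
  · exact (coGuard hsem _ _ _).mpr ((coAct hsem _ _ _).mpr trivial)
  · exact (coZero hsem _).mpr trivial
lemma co_smY (tr) (v) : Co (smY M tr) v := by
  unfold smY
  exact (coAdd hsem _ _ _).mpr ⟨(coGuard hsem _ _ _).mpr ((coAct hsem _ _ _).mpr trivial),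
    (coGuard hsem _ _ _).mpr ((coAct hsem _ _ _).mpr trivial)⟩

lemma ac_sm0 (tr) (v) : ¬ Ac (sm0 M tr) v := by
  unfold sm0; split
  · exact fun h => (acAct hsem _ _ _).mp h
  · exact fun h => (acZero hsem _).mp h
lemma ac_smE (tr) (v) : ¬ Ac (smE M tr) v := by
  unfold smE; split
  · exact fun h => (acAct hsem _ _ _).mp ((acGuard hsem _ _ _).mp h).2
  · exact fun h => (acZero hsem _).mp h
lemma ac_smD (d tr) (v) : ¬ Ac (smD M d tr) v := by
  unfold smD; split
  · exact fun h => (acAct hsem _ _ _).mp ((acGuard hsem _ _ _).mp h).2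
  · exact fun h => (acZero hsem _).mp h
lemma ac_smY (tr) (v) : ¬ Ac (smY M tr) v := by
  unfold smY; intro h
  rcases (acAdd hsem _ _ _).mp h with ⟨h, _⟩ | ⟨h, _⟩ <;>
    exact (acAct hsem _ _ _).mp ((acGuard hsem _ _ _).mp h).2

lemma map_co {f : S × A × Option D × List D × S → ES M}
    (hf : ∀ tr v, Co (f tr) v) : ∀ e ∈ (trL M hfin).map f, ∀ v, Co e v := by
  intro e he v; rcases List.mem_map.1 he with ⟨tr, _, rfl⟩; exact hf tr v

lemma DelXe : Del M hfin (vXe M) = sumL M ((trL M hfin).map (smE M)) (.guard (phiF M) .one) := rfl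
lemma DelXd (d) : Del M hfin (vXd M d) = sumL M ((trL M hfin).map (smD M d.val)) (.guard (phiF M) .one) := rfl
lemma DelY : Del M hfin (vY M) = sumL M ((trL M hfin).map (smY M)) (.guard (phiF M) .one) := rfl
lemma DelX0 : Del M hfin (vX0 M) = sumL M ((trL M hfin).map (sm0 M)) (if M.init ∈ M.final then .one else .zero) := rfl

lemma coXe (v) : Co (.var (vXe M) : ES M) v := by
  rw [coVar hsem]
  exact co_sumL hsem (map_co hsem (co_smE hsem))
    (fun v => (coGuard hsem _ _ _).mpr ((coOne hsem _).mpr trivial)) v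

lemma coXd (d) (v) : Co (.var (vXd M d) : ES M) v := by
  rw [coVar hsem]
  exact co_sumL hsem (map_co hsem (co_smD hsem d.val))
    (fun v => (coGuard hsem _ _ _).mpr ((coOne hsem _).mpr trivial)) v

lemma coY (v) : Co (.var (vY M) : ES M) v := by
  rw [coVar hsem]
  exact co_sumL hsem (map_co hsem (co_smY hsem))
    (fun v => (coGuard hsem _ _ _).mpr ((coOne hsem _).mpr trivial)) v

lemma coX0 (v) : Co (.var (vX0 M) : ES M) v := by
  rw [coVar hsem]
  refine co_sumL hsem (map_co hsem (co_sm0 hsem)) (fun v => ?_) v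
  split
  · exact (coOne hsem _).mpr trivial
  · exact (coZero hsem _).mpr trivial

lemma acXe (v) : Ac (.var (vXe M) : ES M) v ↔ phiF M v = true := by
  rw [acVar hsem, DelXe (hsem := hsem)]
  rw [ac_sumL hsem (map_co hsem (co_smE hsem))
    (fun v => (coGuard hsem _ _ _).mpr ((coOne hsem _).mpr trivial)) v]
  rw [acGuard hsem, acOne hsem]
  constructor
  · rintro (⟨e, he, h⟩ | ⟨h, _⟩)
    · rcases List.mem_map.1 he with ⟨tr, _, rfl⟩; exact absurd h (ac_smE hsem tr v)
    · exact h
  · intro h; exact Or.inr ⟨h, trivial⟩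

lemma acXd (d) (v) : Ac (.var (vXd M d) : ES M) v ↔ phiF M v = true := by
  rw [acVar hsem, DelXd (hsem := hsem)]
  rw [ac_sumL hsem (map_co hsem (co_smD hsem d.val))
    (fun v => (coGuard hsem _ _ _).mpr ((coOne hsem _).mpr trivial)) v]
  rw [acGuard hsem, acOne hsem]
  constructor
  · rintro (⟨e, he, h⟩ | ⟨h, _⟩)
    · rcases List.mem_map.1 he with ⟨tr, _, rfl⟩; exact absurd h (ac_smD hsem _ tr v)
    · exact h
  · intro h; exact Or.inr ⟨h, trivial⟩

lemma acY (v) : Ac (.var (vY M) : ES M) v ↔ phiF M v = true := by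
  rw [acVar hsem, DelY (hsem := hsem)]
  rw [ac_sumL hsem (map_co hsem (co_smY hsem))
    (fun v => (coGuard hsem _ _ _).mpr ((coOne hsem _).mpr trivial)) v]
  rw [acGuard hsem, acOne hsem]
  constructor
  · rintro (⟨e, he, h⟩ | ⟨h, _⟩)
    · rcases List.mem_map.1 he with ⟨tr, _, rfl⟩; exact absurd h (ac_smY hsem tr v)
    · exact h
  · intro h; exact Or.inr ⟨h, trivial⟩

lemma acX0 (v) : Ac (.var (vX0 M) : ES M) v ↔ M.init ∈ M.final := by
  rw [acVar hsem, DelX0 (hsem := hsem)]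
  rw [ac_sumL hsem (map_co hsem (co_sm0 hsem)) (fun v => by
    split
    · exact (coOne hsem _).mpr trivial
    · exact (coZero hsem _).mpr trivial) v]
  constructor
  · rintro (⟨e, he, h⟩ | h)
    · rcases List.mem_map.1 he with ⟨tr, _, rfl⟩; exact absurd h (ac_sm0 hsem tr v)
    · revert h; split
      · intro _; assumption
      · intro h; exact absurd h ((acZero hsem _).mp · )
  · intro h
    refine Or.inr ?_
    rw [if_pos h]
    exact (acOne hsem _).mpr trivial

lemma co_Tl (y : List D) (v) : Co (Tl M y) v := by
  induction y with
  | nil => exact coXe hsem v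
  | cons d y ih =>
      unfold Tl; split
      · rw [coSeq hsem]
        by_cases h : Ac (.var (vXd M ⟨d, by assumption⟩) : ES M) v
        · exact Or.inr ⟨h, ih⟩
        · exact Or.inl ⟨coXd hsem _ v, h⟩
      · exact coY hsem v

lemma co_Mde (y : List D) (v) : Co (Mde M y) v := by
  induction y with
  | nil => exact (coOne hsem _).mpr trivial
  | cons d y ih =>
      unfold Mde; split
      · rw [coSeq hsem]
        by_cases h : Ac (.var (vXd M ⟨d, by assumption⟩) : ES M) v
        · exact Or.inr ⟨h, ih⟩
        · exact Or.inl ⟨coXd hsem _ v, h⟩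
      · exact coY hsem v

lemma ac_Tl (y : List D) (v) : Ac (Tl M y) v ↔ phiF M v = true := by
  induction y with
  | nil => exact acXe hsem v
  | cons d y ih =>
      unfold Tl; split
      · rw [acSeq hsem, acXd hsem, ih]; simp
      · exact acY hsem v

lemma ac_Mde (y : List D) (v) : Ac (Mde M y) v ↔ (y = [] ∨ phiF M v = true) := by
  induction y with
  | nil =>
      rw [show Mde M [] = (.one : ES M) from rfl, acOne hsem]; simp
  | cons d y ih =>
      unfold Mde; split
      · rw [acSeq hsem, acXd hsem, ih]; simp; tauto
      · rw [acY hsem]; simp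

end WithSem
end Sem18b
section Sem18c
open Classical

variable {S A D : Type} {M : PDA S A D} {hfin : M.Tr.Finite}
variable {effect : A → Val S → Val S} {Ac Co : ES M → Val S → Prop}
  {T : ES M → Val S → A → ES M → Val S → Prop}
variable (hsem : IsSem (Del M hfin) effect Ac Co T)
variable (hreset : ∀ a v, effect a v = fun _ => true)
include hsem

lemma co_base_guard : ∀ v, Co (.guard (phiF M) .one : ES M) v := fun v =>
  (coGuard hsem _ _ _).mpr ((coOne hsem _).mpr trivial)

lemma t_base_guard (v a q v') : ¬ T (.guard (phiF M) .one : ES M) v a q v' := fun h =>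
  (tOne hsem _ _ _ _).mp ((tGuard hsem _ _ _ _ _ _).mp h).2

include hreset

lemma tXe (v a q v') : T (.var (vXe M) : ES M) v a q v' ↔
    ∃ s y t, (s, a, none, y, t) ∈ M.Tr ∧ sg s v = true ∧
      q = .signal (sg t) (Tl M y) ∧ v' = vT := by
  rw [tVar hsem, DelXe (hsem := hsem),
    t_sumL hsem (map_co hsem (co_smE hsem)) (co_base_guard hsem)]
  constructor
  · rintro (⟨e, he, h⟩ | h)
    · rcases List.mem_map.1 he with ⟨tr, htr, rfl⟩
      obtain ⟨s, b, od, y, t⟩ := tr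
      unfold smE at h
      split at h
      · next hod =>
          simp only at hod; subst hod
          rcases (tGuard hsem _ _ _ _ _ _).mp h with ⟨hsg, h⟩
          rcases (tAct hsem _ _ _ _ _ _).mp h with ⟨rfl, rfl, hv', _⟩
          refine ⟨s, y, t, (mem_trL M hfin).mp htr, hsg, rfl, ?_⟩
          rw [hv', hreset]; rfl
      · exact absurd h (fun h => (tZero hsem _ _ _ _).mp h)
    · exact absurd h (t_base_guard hsem _ _ _ _)
  · rintro ⟨s, y, t, htr, hsg, rfl, rfl⟩
    refine Or.inl ⟨smE M (s, a, none, y, t), List.mem_map.2 ⟨_, (mem_trL M hfin).mpr htr, rfl⟩, ?_⟩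
    unfold smE
    rw [if_pos rfl]
    refine (tGuard hsem _ _ _ _ _ _).mpr ⟨hsg, (tAct hsem _ _ _ _ _ _).mpr
      ⟨rfl, rfl, by rw [hreset]; rfl, ?_⟩⟩
    exact (coSig hsem _ _ _).mpr ⟨sg_vT t, co_Tl hsem y vT⟩

lemma tXd (d) (v a q v') : T (.var (vXd M d) : ES M) v a q v' ↔
    ∃ s y t, (s, a, some d.val, y, t) ∈ M.Tr ∧ sg s v = true ∧
      q = .signal (sg t) (Mde M y) ∧ v' = vT := by
  rw [tVar hsem, DelXd (hsem := hsem),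
    t_sumL hsem (map_co hsem (co_smD hsem d.val)) (co_base_guard hsem)]
  constructor
  · rintro (⟨e, he, h⟩ | h)
    · rcases List.mem_map.1 he with ⟨tr, htr, rfl⟩
      obtain ⟨s, b, od, y, t⟩ := tr
      unfold smD at h
      split at h
      · next hod =>
          simp only at hod; subst hod
          rcases (tGuard hsem _ _ _ _ _ _).mp h with ⟨hsg, h⟩
          rcases (tAct hsem _ _ _ _ _ _).mp h with ⟨rfl, rfl, hv', _⟩
          refine ⟨s, y, t, (mem_trL M hfin).mp htr, hsg, rfl, ?_⟩
          rw [hv', hreset]; rfl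
      · exact absurd h (fun h => (tZero hsem _ _ _ _).mp h)
    · exact absurd h (t_base_guard hsem _ _ _ _)
  · rintro ⟨s, y, t, htr, hsg, rfl, rfl⟩
    refine Or.inl ⟨smD M d.val (s, a, some d.val, y, t),
      List.mem_map.2 ⟨_, (mem_trL M hfin).mpr htr, rfl⟩, ?_⟩
    unfold smD
    rw [if_pos rfl]
    refine (tGuard hsem _ _ _ _ _ _).mpr ⟨hsg, (tAct hsem _ _ _ _ _ _).mpr
      ⟨rfl, rfl, by rw [hreset]; rfl, ?_⟩⟩
    exact (coSig hsem _ _ _).mpr ⟨sg_vT t, co_Mde hsem y vT⟩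

lemma tY (v a q v') : T (.var (vY M) : ES M) v a q v' ↔
    (∃ tr ∈ M.Tr, a = tr.2.1) ∧ v' = vT ∧
      ((chi v = true ∧ q = .one) ∨ (chi v = false ∧ q = .zero)) := by
  rw [tVar hsem, DelY (hsem := hsem),
    t_sumL hsem (map_co hsem (co_smY hsem)) (co_base_guard hsem)]
  constructor
  · rintro (⟨e, he, h⟩ | h)
    · rcases List.mem_map.1 he with ⟨tr, htr, rfl⟩
      unfold smY at h
      rcases (tAdd hsem _ _ _ _ _ _).mp h with ⟨h, _⟩ | ⟨h, _⟩
      · rcases (tGuard hsem _ _ _ _ _ _).mp h with ⟨hchi, h⟩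
        rcases (tAct hsem _ _ _ _ _ _).mp h with ⟨rfl, rfl, hv', _⟩
        exact ⟨⟨tr, (mem_trL M hfin).mp htr, rfl⟩, by rw [hv', hreset]; rfl,
          Or.inl ⟨hchi, rfl⟩⟩
      · rcases (tGuard hsem _ _ _ _ _ _).mp h with ⟨hchi, h⟩
        rcases (tAct hsem _ _ _ _ _ _).mp h with ⟨rfl, rfl, hv', _⟩
        refine ⟨⟨tr, (mem_trL M hfin).mp htr, rfl⟩, by rw [hv', hreset]; rfl,
          Or.inr ⟨?_, rfl⟩⟩
        simpa using hchi
    · exact absurd h (t_base_guard hsem _ _ _ _)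
  · rintro ⟨⟨tr, htr, rfl⟩, rfl, hq⟩
    refine Or.inl ⟨smY M tr, List.mem_map.2 ⟨_, (mem_trL M hfin).mpr htr, rfl⟩, ?_⟩
    unfold smY
    rcases hq with ⟨hchi, rfl⟩ | ⟨hchi, rfl⟩
    · refine (tAdd hsem _ _ _ _ _ _).mpr (Or.inl ⟨(tGuard hsem _ _ _ _ _ _).mpr
        ⟨hchi, (tAct hsem _ _ _ _ _ _).mpr ⟨rfl, rfl, by rw [hreset]; rfl,
          (coOne hsem _).mpr trivial⟩⟩,
        (coGuard hsem _ _ _).mpr ((coAct hsem _ _ _).mpr trivial)⟩)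
    · refine (tAdd hsem _ _ _ _ _ _).mpr (Or.inr ⟨(tGuard hsem _ _ _ _ _ _).mpr
        ⟨by simp [hchi], (tAct hsem _ _ _ _ _ _).mpr ⟨rfl, rfl, by rw [hreset]; rfl,
          (coZero hsem _).mpr trivial⟩⟩,
        (coGuard hsem _ _ _).mpr ((coAct hsem _ _ _).mpr trivial)⟩)

lemma tX0 (v a q v') : T (.var (vX0 M) : ES M) v a q v' ↔
    ∃ y t, (M.init, a, none, y, t) ∈ M.Tr ∧ q = .signal (sg t) (Tl M y) ∧ v' = vT := by
  rw [tVar hsem, DelX0 (hsem := hsem),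
    t_sumL hsem (map_co hsem (co_sm0 hsem)) (fun v => by
      split
      · exact (coOne hsem _).mpr trivial
      · exact (coZero hsem _).mpr trivial)]
  constructor
  · rintro (⟨e, he, h⟩ | h)
    · rcases List.mem_map.1 he with ⟨tr, htr, rfl⟩
      obtain ⟨s, b, od, y, t⟩ := tr
      unfold sm0 at h
      split at h
      · next hc =>
          obtain ⟨hs, hod⟩ := hc
          simp only at hs hod; subst hs; subst hod
          rcases (tAct hsem _ _ _ _ _ _).mp h with ⟨rfl, rfl, hv', _⟩
          exact ⟨y, t, (mem_trL M hfin).mp htr, rfl, by rw [hv', hreset]; rfl⟩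
      · exact absurd h (fun h => (tZero hsem _ _ _ _).mp h)
    · revert h; split
      · exact fun h => absurd h (fun h => (tOne hsem _ _ _ _).mp h)
      · exact fun h => absurd h (fun h => (tZero hsem _ _ _ _).mp h)
  · rintro ⟨y, t, htr, rfl, rfl⟩
    refine Or.inl ⟨sm0 M (M.init, a, none, y, t),
      List.mem_map.2 ⟨_, (mem_trL M hfin).mpr htr, rfl⟩, ?_⟩
    unfold sm0
    rw [if_pos ⟨rfl, rfl⟩]
    refine (tAct hsem _ _ _ _ _ _).mpr ⟨rfl, rfl, by rw [hreset]; rfl, ?_⟩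
    exact (coSig hsem _ _ _).mpr ⟨sg_vT t, co_Tl hsem y vT⟩

end Sem18c
section Shapes18
open Classical

variable {S A D : Type} {M : PDA S A D}

inductive Kont (M : PDA S A D) : ES M → List D → Prop
  | eps : Kont M (.var (vXe M)) []
  | dead (d x) : d ∉ PopSet M → Kont M (.var (vY M)) (d :: x)
  | cons (d : ↥(PopSet M)) {q x} : Kont M q x → Kont M (.seq (.var (vXd M d)) q) (d.val :: x)

inductive Mid (M : PDA S A D) : ES M → List D → Bool → Prop
  | one : Mid M .one [] false
  | dead (d z) : d ∉ PopSet M → Mid M (.var (vY M)) (d :: z) true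
  | cons (d : ↥(PopSet M)) {m z b} : Mid M m z b → Mid M (.seq (.var (vXd M d)) m) (d.val :: z) b

inductive Hd (M : PDA S A D) : ES M → S → List D → Bool → Prop
  | base {m z b} (w) : Mid M m z b → Hd M (.signal (sg w) m) w z b
  | stepD {p w z} (m z' b') : Hd M p w z true → Mid M m z' b' → Hd M (.seq p m) w z true
  | stepL {p w z m z' b'} : Hd M p w z false → Mid M m z' b' → Hd M (.seq p m) w (z ++ z') b'

inductive RelC (M : PDA S A D) : ES M → S → List D → Prop
  | tl {q x} (w) : Kont M q x → RelC M (.signal (sg w) q) w x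
  | midL {p w z q x} : Hd M p w z false → Kont M q x → RelC M (.seq p q) w (z ++ x)
  | midD {p w z q x'} : Hd M p w z true → Kont M q x' → RelC M (.seq p q) w z

lemma kont_Tl (x : List D) : Kont M (Tl M x) x := by
  induction x with
  | nil => exact Kont.eps
  | cons d x ih =>
      unfold Tl; split
      · exact Kont.cons _ ih
      · exact Kont.dead _ _ (by assumption)

lemma mid_Mde (y : List D) :
    Mid M (Mde M y) y false ∨ ∀ rest, Mid M (Mde M y) (y ++ rest) true := by
  induction y with
  | nil => exact Or.inl Mid.one
  | cons d y ih =>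
      unfold Mde; split
      · rcases ih with h | h
        · exact Or.inl (Mid.cons _ h)
        · exact Or.inr (fun rest => Mid.cons _ (h rest))
      · exact Or.inr (fun rest => Mid.dead _ _ (by assumption))

lemma head_live_Mid {m : ES M} {d z b} (h : Mid M m (d :: z) b) (hb : b = false) :
    d ∈ PopSet M := by
  cases h with
  | dead => simp_all
  | cons dd hm => exact dd.2

lemma head_live_Hd {p : ES M} {w z b} (h : Hd M p w z b) :
    ∀ d z₂, z = d :: z₂ → b = false → d ∈ PopSet M := by
  induction h with
  | base w hm =>
      intro d z₂ hz hb; subst hz; exact head_live_Mid hm hb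
  | stepD m z' b' h hm ih => intro d z₂ hz hb; exact absurd hb (by simp)
  | @stepL p₀ w₀ z₀ m z₁ b₁ h hm ih =>
      intro d z₂ hz hb
      cases z₀ with
      | nil =>
          simp only [List.nil_append] at hz
          exact head_live_Mid (hz ▸ hm) hb
      | cons e z₀' =>
          rw [List.cons_append, List.cons.injEq] at hz
          exact hz.1 ▸ ih e z₀' rfl rfl

lemma mid_ne_nil {m : ES M} {z} (h : Mid M m z true) : z ≠ [] := by
  cases h <;> simp

lemma hd_ne_nil' {p : ES M} {w z b} (h : Hd M p w z b) : b = true → z ≠ [] := by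
  induction h with
  | base w h => intro hb; cases h <;> simp_all
  | stepD m z' b' h hm ih => intro _; exact ih rfl
  | stepL h hm ih => intro hb; subst hb; have := mid_ne_nil hm; simp_all

lemma hd_ne_nil {p : ES M} {w z} (h : Hd M p w z true) : z ≠ [] :=
  hd_ne_nil' h rfl

end Shapes18
section Sem18d
open Classical

variable {S A D : Type} {M : PDA S A D} {hfin : M.Tr.Finite}
variable {effect : A → Val S → Val S} {Ac Co : ES M → Val S → Prop}
  {T : ES M → Val S → A → ES M → Val S → Prop}
variable (hsem : IsSem (Del M hfin) effect Ac Co T)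
variable (hreset : ∀ a v, effect a v = fun _ => true)
include hsem

lemma co_seq_of {p q : ES M} {v} (hp : Co p v) (hq : Co q v) : Co (.seq p q) v := by
  refine (coSeq hsem _ _ _).mpr ?_
  by_cases h : Ac p v
  · exact Or.inr ⟨h, hq⟩
  · exact Or.inl ⟨hp, h⟩

lemma co_Kont {q : ES M} {x} (h : Kont M q x) (v) : Co q v := by
  induction h with
  | eps => exact coXe hsem v
  | dead d x hd => exact coY hsem v
  | cons d hk ih => exact co_seq_of hsem (coXd hsem d v) ih

lemma ac_Kont {q : ES M} {x} (h : Kont M q x) (v) : Ac q v ↔ phiF M v = true := by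
  induction h with
  | eps => exact acXe hsem v
  | dead d x hd => exact acY hsem v
  | cons d hk ih => rw [acSeq hsem, acXd hsem, ih]; tauto

lemma co_Mid {m : ES M} {z b} (h : Mid M m z b) (v) : Co m v := by
  induction h with
  | one => exact (coOne hsem _).mpr trivial
  | dead d z hd => exact coY hsem v
  | cons d hm ih => exact co_seq_of hsem (coXd hsem d v) ih

lemma ac_Mid {m : ES M} {z b} (h : Mid M m z b) (v) :
    Ac m v ↔ (z = [] ∨ phiF M v = true) := by
  induction h with
  | one => rw [acOne hsem]; simp
  | dead d z hd => rw [acY hsem]; simp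
  | cons d hm ih => rw [acSeq hsem, acXd hsem, ih]; simp; tauto

lemma ac_Hd {p : ES M} {w z b} (h : Hd M p w z b) (v) :
    Ac p v ↔ (sg w v = true ∧ (z = [] ∨ phiF M v = true)) := by
  induction h with
  | base w hm => rw [acSig hsem, ac_Mid hsem hm]
  | stepD m z' b' h hm ih =>
      rw [acSeq hsem, ih, ac_Mid hsem hm]
      have hz := hd_ne_nil h
      simp [hz] <;> tauto
  | stepL h hm ih =>
      rw [acSeq hsem, ih, ac_Mid hsem hm]
      simp [List.append_eq_nil_iff]; tauto

lemma co_Hd {p : ES M} {w z b} (h : Hd M p w z b) (v) : Co p v ↔ sg w v = true := by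
  induction h with
  | base w hm => rw [coSig hsem]; simp [co_Mid hsem hm]
  | @stepD p₀ w₀ z₀ m z' b' h hm ih =>
      rw [coSeq hsem, ih]
      constructor
      · rintro (⟨h1, _⟩ | ⟨h1, _⟩)
        · exact h1
        · exact ((ac_Hd hsem h v).mp h1).1
      · intro h1
        by_cases ha : Ac p₀ v
        · exact Or.inr ⟨ha, co_Mid hsem hm v⟩
        · exact Or.inl ⟨h1, ha⟩
  | @stepL p₀ w₀ z₀ m z' b' h hm ih =>
      rw [coSeq hsem, ih]
      constructor
      · rintro (⟨h1, _⟩ | ⟨h1, _⟩)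
        · exact h1
        · exact ((ac_Hd hsem h v).mp h1).1
      · intro h1
        by_cases ha : Ac p₀ v
        · exact Or.inr ⟨ha, co_Mid hsem hm v⟩
        · exact Or.inl ⟨h1, ha⟩

lemma ac_RelC {p : ES M} {w x} (h : RelC M p w x) (v) :
    Ac p v ↔ (sg w v = true ∧ phiF M v = true) := by
  cases h with
  | tl w hk => rw [acSig hsem, ac_Kont hsem hk]
  | midL hh hk => rw [acSeq hsem, ac_Hd hsem hh, ac_Kont hsem hk]; tauto
  | midD hh hk =>
      rw [acSeq hsem, ac_Hd hsem hh, ac_Kont hsem hk]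
      have hz := hd_ne_nil hh
      simp [hz] <;> tauto

lemma co_RelC {p : ES M} {w x} (h : RelC M p w x) (v) : Co p v ↔ sg w v = true := by
  cases h with
  | tl w hk => rw [coSig hsem]; simp [co_Kont hsem hk]
  | @midL p₀ w₀ z₀ q₀ x₀ hh hk =>
      rw [coSeq hsem, co_Hd hsem hh]
      constructor
      · rintro (⟨h1, _⟩ | ⟨h1, _⟩)
        · exact h1
        · exact ((ac_Hd hsem hh v).mp h1).1
      · intro h1
        by_cases ha : Ac p₀ v
        · exact Or.inr ⟨ha, co_Kont hsem hk v⟩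
        · exact Or.inl ⟨h1, ha⟩
  | @midD p₀ w₀ z₀ q₀ x₀ hh hk =>
      rw [coSeq hsem, co_Hd hsem hh]
      constructor
      · rintro (⟨h1, _⟩ | ⟨h1, _⟩)
        · exact h1
        · exact ((ac_Hd hsem hh v).mp h1).1
      · intro h1
        by_cases ha : Ac p₀ v
        · exact Or.inr ⟨ha, co_Kont hsem hk v⟩
        · exact Or.inl ⟨h1, ha⟩

lemma noT_fin {p : ES M} {w z b} (h : Hd M p w z b) (hz : z = []) (hb : b = false) :
    ∀ v a q v', ¬ T p v a q v' := by
  induction h with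
  | base w hm =>
      subst hz; subst hb
      cases hm
      intro v a q v' ht
      exact (tOne hsem _ _ _ _).mp ((tSig hsem _ _ _ _ _ _).mp ht).2
  | stepD m z' b' h hm ih => exact absurd hb (by simp)
  | stepL h hm ih =>
      rw [List.append_eq_nil_iff] at hz
      subst hb
      have hm' := hm
      rw [hz.2] at hm'
      cases hm'
      intro v a q v' ht
      rcases (tSeq hsem _ _ _ _ _ _).mp ht with ⟨r', ht', _, _⟩ | ⟨_, _, ht'⟩
      · exact ih hz.1 rfl v a r' v' ht'
      · exact (tOne hsem _ _ _ _).mp ht'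

include hreset

lemma ex_Mid {m : ES M} {z b} (h : Mid M m z b) :
    ∀ d z₂, z = d :: z₂ → d ∈ PopSet M → ∀ v, (∀ s, sg s v = true) →
      ∃ a q, T m v a q vT ∧ Co q vT := by
  induction h with
  | one => intro d z₂ hz; simp at hz
  | dead d₀ z₀ hd =>
      intro d z₂ hz hdP _ _
      rw [List.cons.injEq] at hz
      exact absurd (hz.1 ▸ hdP) hd
  | @cons dd m₂ z₃ b₃ hm ih =>
      rintro d z₂ hz hdP v hv
      obtain ⟨s, a, y, t, htr⟩ := dd.2
      refine ⟨a, .seq (.signal (sg t) (Mde M y)) m₂, ?_, ?_⟩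
      · refine (tSeq hsem _ _ _ _ _ _).mpr (Or.inl ⟨.signal (sg t) (Mde M y), ?_, rfl, ?_⟩)
        · exact (tXd hsem hreset dd v a _ vT).mpr ⟨s, y, t, htr, hv s, rfl, rfl⟩
        · exact co_seq_of hsem ((coSig hsem _ _ _).mpr ⟨sg_vT t, co_Mde hsem y vT⟩)
            (co_Mid hsem hm vT)
      · exact co_seq_of hsem ((coSig hsem _ _ _).mpr ⟨sg_vT t, co_Mde hsem y vT⟩)
          (co_Mid hsem hm vT)

lemma ex_Hd {p : ES M} {w z b} (h : Hd M p w z b) :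
    ∀ d z₂, z = d :: z₂ → d ∈ PopSet M → ∀ v, (∀ s, sg s v = true) →
      ∃ a q, T p v a q vT ∧ Co q vT := by
  induction h with
  | base w hm =>
      intro d z₂ hz hdP v hv
      obtain ⟨a, q, ht, hcq⟩ := ex_Mid hsem hreset hm d z₂ hz hdP v hv
      exact ⟨a, q, (tSig hsem _ _ _ _ _ _).mpr ⟨hv w, ht⟩, hcq⟩
  | stepD m z' b' h hm ih =>
      intro d z₂ hz hdP v hv
      obtain ⟨a, q, ht, hcq⟩ := ih d z₂ hz hdP v hv
      refine ⟨a, .seq q m, (tSeq hsem _ _ _ _ _ _).mpr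
        (Or.inl ⟨q, ht, rfl, co_seq_of hsem hcq (co_Mid hsem hm vT)⟩),
        co_seq_of hsem hcq (co_Mid hsem hm vT)⟩
  | stepL h hm ih =>
      rename_i p₀ w₀ z₀ m₀ z₁ b₁
      intro d z₂ hz hdP v hv
      cases z₀ with
      | nil =>
          simp only [List.nil_append] at hz
          obtain ⟨a, q, ht, hcq⟩ := ex_Mid hsem hreset hm d z₂ hz hdP v hv
          refine ⟨a, q, (tSeq hsem _ _ _ _ _ _).mpr (Or.inr ⟨?_, ?_, ht⟩), hcq⟩
          · exact (ac_Hd hsem h v).mpr ⟨hv w₀, Or.inl rfl⟩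
          · exact noT_fin hsem h rfl rfl v
      | cons e z₀' =>
          rw [List.cons_append, List.cons.injEq] at hz
          obtain ⟨a, q, ht, hcq⟩ := ih e z₀' rfl (hz.1 ▸ hdP) v hv
          refine ⟨a, .seq q m₀, (tSeq hsem _ _ _ _ _ _).mpr
            (Or.inl ⟨q, ht, rfl, co_seq_of hsem hcq (co_Mid hsem hm vT)⟩),
            co_seq_of hsem hcq (co_Mid hsem hm vT)⟩

lemma shape_Kont {q : ES M} {x} (h : Kont M q x) {v a r v'} (ht : T q v a r v') :
    r = .one ∨ r = .zero ∨ (∃ φ m, r = .signal φ m) ∨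
      (∃ r₁ q₂, r = .seq r₁ q₂ ∧ sizeOf q₂ < sizeOf q) := by
  induction h generalizing r with
  | eps =>
      rcases (tXe hsem hreset v a r v').mp ht with ⟨s, y, t, _, _, rfl, _⟩
      exact Or.inr (Or.inr (Or.inl ⟨_, _, rfl⟩))
  | dead d x hd =>
      rcases (tY hsem hreset v a r v').mp ht with ⟨_, _, ⟨_, rfl⟩ | ⟨_, rfl⟩⟩
      · exact Or.inl rfl
      · exact Or.inr (Or.inl rfl)
  | cons d hk ih =>
      rcases (tSeq hsem _ _ _ _ _ _).mp ht with ⟨r', ht', rfl, _⟩ | ⟨_, _, ht'⟩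
      · exact Or.inr (Or.inr (Or.inr ⟨r', _, rfl, by simp <;> omega⟩))
      · rcases ih ht' with h1 | h1 | h1 | ⟨r₁, q₃, rfl, hs⟩
        · exact Or.inl h1
        · exact Or.inr (Or.inl h1)
        · exact Or.inr (Or.inr (Or.inl h1))
        · exact Or.inr (Or.inr (Or.inr ⟨r₁, q₃, rfl, by simp <;> omega⟩))

lemma shape_Mid {m : ES M} {z b} (h : Mid M m z b) {v a r v'} (ht : T m v a r v') :
    r = .one ∨ r = .zero ∨ (∃ r₁ m₂, r = .seq r₁ m₂ ∧ sizeOf m₂ < sizeOf m) := by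
  induction h generalizing r with
  | one => exact absurd ht (fun h => (tOne hsem _ _ _ _).mp h)
  | dead d z hd =>
      rcases (tY hsem hreset v a r v').mp ht with ⟨_, _, ⟨_, rfl⟩ | ⟨_, rfl⟩⟩
      · exact Or.inl rfl
      · exact Or.inr (Or.inl rfl)
  | cons d hm ih =>
      rcases (tSeq hsem _ _ _ _ _ _).mp ht with ⟨r', ht', rfl, _⟩ | ⟨_, _, ht'⟩
      · exact Or.inr (Or.inr ⟨r', _, rfl, by simp <;> omega⟩)
      · rcases ih ht' with h1 | h1 | ⟨r₁, m₃, rfl, hs⟩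
        · exact Or.inl h1
        · exact Or.inr (Or.inl h1)
        · exact Or.inr (Or.inr ⟨r₁, m₃, rfl, by simp <;> omega⟩)

lemma trne_Kont {q : ES M} {x} (h : Kont M q x) {v a r v'} (ht : T q v a r v') :
    ∃ tr, tr ∈ M.Tr := by
  induction h generalizing a r with
  | eps =>
      rcases (tXe hsem hreset v a r v').mp ht with ⟨s, y, t, htr, _⟩
      exact ⟨_, htr⟩
  | dead d x hd =>
      rcases (tY hsem hreset v a r v').mp ht with ⟨⟨tr, htr, _⟩, _⟩
      exact ⟨tr, htr⟩
  | cons d hk ih =>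
      rcases (tSeq hsem _ _ _ _ _ _).mp ht with ⟨r', ht', _, _⟩ | ⟨_, _, ht'⟩
      · rcases (tXd hsem hreset d v a r' v').mp ht' with ⟨s, y, t, htr, _⟩
        exact ⟨_, htr⟩
      · exact ih ht'

end Sem18d
section Sem18e
open Classical

variable {S A D : Type} {M : PDA S A D} {hfin : M.Tr.Finite}
variable {effect : A → Val S → Val S} {Ac Co : ES M → Val S → Prop}
  {T : ES M → Val S → A → ES M → Val S → Prop}
variable (hsem : IsSem (Del M hfin) effect Ac Co T)
variable (hreset : ∀ a v, effect a v = fun _ => true)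
include hsem hreset

lemma trne_Mid {m : ES M} {z b} (h : Mid M m z b) {v a r v'} (ht : T m v a r v') :
    ∃ tr, tr ∈ M.Tr := by
  induction h generalizing r with
  | one => exact absurd ht (fun h => (tOne hsem _ _ _ _).mp h)
  | dead d z hd =>
      rcases (tY hsem hreset v a r v').mp ht with ⟨⟨tr, htr, _⟩, _⟩
      exact ⟨tr, htr⟩
  | cons d hm ih =>
      rcases (tSeq hsem _ _ _ _ _ _).mp ht with ⟨r', ht', _, _⟩ | ⟨_, _, ht'⟩
      · rcases (tXd hsem hreset d v a r' v').mp ht' with ⟨s, y, t, htr, _⟩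
        exact ⟨_, htr⟩
      · exact ih ht'

lemma exY_Mid {m : ES M} {z b} (h : Mid M m z b) {d z₂} (hz : z = d :: z₂)
    (hd : d ∉ PopSet M) (htr : ∃ tr, tr ∈ M.Tr) (v : Val S) :
    ∃ a' r, T m v a' r vT ∧ Co r vT := by
  cases h with
  | one => simp at hz
  | dead d₀ z₀ hd₀ =>
      obtain ⟨tr, htr⟩ := htr
      by_cases hc : chi (S := S) v = true
      · exact ⟨tr.2.1, .one, (tY hsem hreset v _ _ _).mpr
          ⟨⟨tr, htr, rfl⟩, rfl, Or.inl ⟨hc, rfl⟩⟩, (coOne hsem _).mpr trivial⟩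
      · exact ⟨tr.2.1, .zero, (tY hsem hreset v _ _ _).mpr
          ⟨⟨tr, htr, rfl⟩, rfl, Or.inr ⟨by simpa using hc, rfl⟩⟩, (coZero hsem _).mpr trivial⟩
  | cons dd hm =>
      rw [List.cons.injEq] at hz
      exact absurd (hz.1 ▸ dd.2) hd

lemma exY_Hd {p : ES M} {w z b} (h : Hd M p w z b) :
    ∀ d z₂, z = d :: z₂ → d ∉ PopSet M → (∃ tr, tr ∈ M.Tr) →
      ∀ v, (∀ s, sg s v = true) → ∃ a' r, T p v a' r vT ∧ Co r vT := by
  induction h with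
  | base w hm =>
      intro d z₂ hz hd htr v hv
      obtain ⟨a', r, ht, hc⟩ := exY_Mid hsem hreset hm hz hd htr v
      exact ⟨a', r, (tSig hsem _ _ _ _ _ _).mpr ⟨hv w, ht⟩, hc⟩
  | @stepD p₀ w₀ z₀ m z₁ b₁ hp hm ih =>
      intro d z₂ hz hd htr v hv
      obtain ⟨a', r, ht, hc⟩ := ih d z₂ hz hd htr v hv
      have hc' := co_seq_of hsem hc (co_Mid hsem hm vT)
      exact ⟨a', .seq r m, (tSeq hsem _ _ _ _ _ _).mpr (Or.inl ⟨r, ht, rfl, hc'⟩), hc'⟩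
  | @stepL p₀ w₀ z₀ m z₁ b₁ hp hm ih =>
      intro d z₂ hz hd htr v hv
      cases z₀ with
      | nil =>
          simp only [List.nil_append] at hz
          obtain ⟨a', r, ht, hc⟩ := exY_Mid hsem hreset hm hz hd htr v
          exact ⟨a', r, (tSeq hsem _ _ _ _ _ _).mpr (Or.inr
            ⟨(ac_Hd hsem hp v).mpr ⟨hv w₀, Or.inl rfl⟩, noT_fin hsem hp rfl rfl v, ht⟩), hc⟩
      | cons e z₀' =>
          rw [List.cons_append, List.cons.injEq] at hz
          exact absurd (hz.1 ▸ head_live_Hd hp e z₀' rfl rfl) hd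

lemma F_Mid {m : ES M} {z b} (h : Mid M m z b) {w a q}
    (h1 : T m vT a q vT) (h2 : T m vF a q vT) (h3 : T m (vI w) a q vT) :
    ∃ (d : D) (z' y : List D) (t : S) (m₂ : ES M), d ∈ PopSet M ∧ z = d :: z' ∧
      (w, a, some d, y, t) ∈ M.Tr ∧ q = .seq (.signal (sg t) (Mde M y)) m₂ ∧
      Mid M m₂ z' b := by
  cases h with
  | one => exact absurd h1 (fun h => (tOne hsem _ _ _ _).mp h)
  | dead d₀ z₀ hd =>
      rcases (tY hsem hreset vT a q vT).mp h1 with ⟨_, _, ⟨_, rfl⟩ | ⟨hc, _⟩⟩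
      · rcases (tY hsem hreset vF a _ vT).mp h2 with ⟨_, _, ⟨hc2, _⟩ | ⟨_, h2'⟩⟩
        · rw [chi_vF w] at hc2; simp at hc2
        · simp at h2'
      · rw [chi_vT] at hc; simp at hc
  | @cons dd m₂ z₂ b₂ hm =>
      obtain ⟨s₀, a₀, y₀, t₀, htr₀⟩ := dd.2
      rcases (tSeq hsem _ _ _ _ _ _).mp h1 with ⟨r₁, ht₁, rfl, _⟩ | ⟨_, hno, _⟩
      · rcases (tSeq hsem _ _ _ _ _ _).mp h3 with ⟨r₂, ht₂, heq, _⟩ | ⟨_, _, ht₂⟩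
        · rw [SExpr.seq.injEq] at heq
          obtain ⟨heq1, -⟩ := heq
          subst heq1
          rcases (tXd hsem hreset dd (vI w) a _ vT).mp ht₂ with ⟨s, y, t, htr, hsg, rfl, -⟩
          rw [sg_vI] at hsg
          subst hsg
          exact ⟨dd.val, z₂, y, t, m₂, dd.2, rfl, htr, rfl, hm⟩
        · rcases shape_Mid hsem hreset hm ht₂ with h' | h' | ⟨r₃, m₃, h', hs⟩
          · exact absurd h' (by simp)
          · exact absurd h' (by simp)
          · rw [SExpr.seq.injEq] at h'
            obtain ⟨-, h''⟩ := h'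
            subst h''
            omega
      · exact absurd ((tXd hsem hreset dd vT a₀ _ vT).mpr
          ⟨s₀, y₀, t₀, htr₀, sg_vT s₀, rfl, rfl⟩) (hno a₀ _ vT)

lemma F_dead {p : ES M} {w z b} (h : Hd M p w z b) :
    ∀ d z₂, z = d :: z₂ → d ∉ PopSet M →
      ∀ a r, T p vT a r vT → T p vF a r vT → False := by
  induction h with
  | base w hm =>
      intro d z₂ hz hd a r h1 h2
      subst hz
      cases hm with
      | dead _ _ hd₀ =>
          have h1' := ((tSig hsem _ _ _ _ _ _).mp h1).2
          have h2' := ((tSig hsem _ _ _ _ _ _).mp h2).2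
          rcases (tY hsem hreset vT a r vT).mp h1' with ⟨_, _, ⟨_, rfl⟩ | ⟨hc, _⟩⟩
          · rcases (tY hsem hreset vF a _ vT).mp h2' with ⟨_, _, ⟨hc2, _⟩ | ⟨_, h2''⟩⟩
            · rw [chi_vF w] at hc2; simp at hc2
            · simp at h2''
          · rw [chi_vT] at hc; simp at hc
      | cons dd hm₂ => exact absurd dd.2 hd
  | @stepD p₀ w₀ z₀ m z₁ b₁ hp hm ih =>
      intro d z₂ hz hd a r h1 h2
      rcases (tSeq hsem _ _ _ _ _ _).mp h1 with ⟨r₁, ht₁, rfl, _⟩ | ⟨_, hno, htm⟩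
      · rcases (tSeq hsem _ _ _ _ _ _).mp h2 with ⟨r₂, ht₂, heq, _⟩ | ⟨_, hno, htm⟩
        · rw [SExpr.seq.injEq] at heq
          obtain ⟨heq1, -⟩ := heq
          subst heq1
          exact ih d z₂ hz hd a _ ht₁ ht₂
        · obtain ⟨a', r', ht', _⟩ := exY_Hd hsem hreset hp d z₂ hz hd
            (trne_Mid hsem hreset hm htm) vF sg_vF
          exact hno a' r' vT ht'
      · obtain ⟨a', r', ht', _⟩ := exY_Hd hsem hreset hp d z₂ hz hd
          (trne_Mid hsem hreset hm htm) vT sg_vT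
        exact hno a' r' vT ht'
  | @stepL p₀ w₀ z₀ m z₁ b₁ hp hm ih =>
      intro d z₂ hz hd a r h1 h2
      cases z₀ with
      | nil =>
          simp only [List.nil_append] at hz
          subst hz
          have hno := noT_fin hsem hp rfl rfl
          rcases (tSeq hsem _ _ _ _ _ _).mp h1 with ⟨r₁, ht₁, _, _⟩ | ⟨_, _, htm1⟩
          · exact hno vT a r₁ vT ht₁
          rcases (tSeq hsem _ _ _ _ _ _).mp h2 with ⟨r₂, ht₂, _, _⟩ | ⟨_, _, htm2⟩
          · exact hno vF a r₂ vT ht₂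
          cases hm with
          | dead _ _ hd₀ =>
              rcases (tY hsem hreset vT a r vT).mp htm1 with ⟨_, _, ⟨_, rfl⟩ | ⟨hc, _⟩⟩
              · rcases (tY hsem hreset vF a _ vT).mp htm2 with ⟨_, _, ⟨hc2, _⟩ | ⟨_, h2''⟩⟩
                · rw [chi_vF w₀] at hc2; simp at hc2
                · simp at h2''
              · rw [chi_vT] at hc; simp at hc
          | cons dd hm₂ => exact absurd dd.2 hd
      | cons e z₀' =>
          rw [List.cons_append, List.cons.injEq] at hz
          exact absurd (hz.1 ▸ head_live_Hd hp e z₀' rfl rfl) hd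

lemma F_Hd {p : ES M} {w z b} (h : Hd M p w z b) :
    ∀ a q, T p vT a q vT → T p vF a q vT → T p (vI w) a q vT →
    ∃ d z' y t, z = d :: z' ∧ (w, a, some d, y, t) ∈ M.Tr ∧
      ((b = true ∧ Hd M q t (y ++ z') true) ∨
       (b = false ∧ (Hd M q t (y ++ z') false ∨
          ∀ rest, Hd M q t (y ++ z' ++ rest) true))) := by
  induction h with
  | @base m₀ zz bb w hm =>
      intro a q h1 h2 h3
      have h1' := ((tSig hsem _ _ _ _ _ _).mp h1).2
      have h2' := ((tSig hsem _ _ _ _ _ _).mp h2).2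
      have h3' := ((tSig hsem _ _ _ _ _ _).mp h3).2
      obtain ⟨d, z', y, t, m₂, hdP, rfl, htr, rfl, hm₂⟩ :=
        F_Mid hsem hreset hm h1' h2' h3'
      refine ⟨d, z', y, t, rfl, htr, ?_⟩
      rcases mid_Mde (M := M) y with hy | hy
      · have hq : Hd M (.seq (.signal (sg t) (Mde M y)) m₂) t (y ++ z') bb :=
          Hd.stepL (Hd.base t hy) hm₂
        cases bb with
        | true => exact Or.inl ⟨rfl, hq⟩
        | false => exact Or.inr ⟨rfl, Or.inl hq⟩
      · cases bb with
        | true =>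
            exact Or.inl ⟨rfl, Hd.stepD _ _ _ (Hd.base t (hy z')) hm₂⟩
        | false =>
            refine Or.inr ⟨rfl, Or.inr fun rest => ?_⟩
            have := Hd.stepD _ _ _ (Hd.base t (hy (z' ++ rest))) hm₂
            simpa [List.append_assoc] using this
  | @stepD p₀ w₀ z₀ m z₁ b₁ hp hm ih =>
      intro a q h1 h2 h3
      obtain ⟨d, z₂, rfl⟩ := List.exists_cons_of_ne_nil (hd_ne_nil hp)
      by_cases hdP : d ∈ PopSet M
      · rcases (tSeq hsem _ _ _ _ _ _).mp h1 with ⟨r₁, ht₁, rfl, _⟩ | ⟨_, hno, _⟩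
        · rcases (tSeq hsem _ _ _ _ _ _).mp h2 with ⟨r₂, ht₂, heq, _⟩ | ⟨_, hno, _⟩
          · rw [SExpr.seq.injEq] at heq
            obtain ⟨heq1, -⟩ := heq
            subst heq1
            rcases (tSeq hsem _ _ _ _ _ _).mp h3 with ⟨r₃, ht₃, heq, _⟩ | ⟨_, _, ht₃⟩
            · rw [SExpr.seq.injEq] at heq
              obtain ⟨heq1, -⟩ := heq
              subst heq1
              obtain ⟨d', z₂', y, t, hzz, htr, hfl⟩ := ih a _ ht₁ ht₂ ht₃
              rw [List.cons.injEq] at hzz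
              obtain ⟨rfl, rfl⟩ := hzz
              rcases hfl with ⟨-, hq⟩ | ⟨hb, -⟩
              · exact ⟨d, z₂, y, t, rfl, htr,
                  Or.inl ⟨rfl, Hd.stepD _ _ _ hq hm⟩⟩
              · exact absurd hb (by simp)
            · rcases shape_Mid hsem hreset hm ht₃ with h' | h' | ⟨r₄, m₄, h', hs⟩
              · exact absurd h' (by simp)
              · exact absurd h' (by simp)
              · rw [SExpr.seq.injEq] at h'
                obtain ⟨-, h''⟩ := h'
                subst h''
                omega
          · obtain ⟨a', q', ht', -⟩ := ex_Hd hsem hreset hp d z₂ rfl hdP vF sg_vF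
            exact absurd ht' (hno a' q' vT)
        · obtain ⟨a', q', ht', -⟩ := ex_Hd hsem hreset hp d z₂ rfl hdP vT sg_vT
          exact absurd ht' (hno a' q' vT)
      · exfalso
        rcases (tSeq hsem _ _ _ _ _ _).mp h1 with ⟨r₁, ht₁, rfl, _⟩ | ⟨_, hno, htm⟩
        · rcases (tSeq hsem _ _ _ _ _ _).mp h2 with ⟨r₂, ht₂, heq, _⟩ | ⟨_, hno, htm⟩
          · rw [SExpr.seq.injEq] at heq
            obtain ⟨heq1, -⟩ := heq
            subst heq1
            exact F_dead hsem hreset hp d z₂ rfl hdP a _ ht₁ ht₂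
          · obtain ⟨a', r', ht', _⟩ := exY_Hd hsem hreset hp d z₂ rfl hdP
              (trne_Mid hsem hreset hm htm) vF sg_vF
            exact hno a' r' vT ht'
        · obtain ⟨a', r', ht', _⟩ := exY_Hd hsem hreset hp d z₂ rfl hdP
            (trne_Mid hsem hreset hm htm) vT sg_vT
          exact hno a' r' vT ht'
  | @stepL p₀ w₀ z₀ m z₁ b₁ hp hm ih =>
      intro a q h1 h2 h3
      cases z₀ with
      | nil =>
          have hno := noT_fin hsem hp rfl rfl
          rcases (tSeq hsem _ _ _ _ _ _).mp h1 with ⟨r₁, ht₁, _, _⟩ | ⟨_, _, htm1⟩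
          · exact absurd ht₁ (hno vT a r₁ vT)
          rcases (tSeq hsem _ _ _ _ _ _).mp h2 with ⟨r₂, ht₂, _, _⟩ | ⟨_, _, htm2⟩
          · exact absurd ht₂ (hno vF a r₂ vT)
          rcases (tSeq hsem _ _ _ _ _ _).mp h3 with ⟨r₃, ht₃, _, _⟩ | ⟨_, _, htm3⟩
          · exact absurd ht₃ (hno (vI w₀) a r₃ vT)
          obtain ⟨d, z', y, t, m₂, hdP, hz1, htr, rfl, hm₂⟩ :=
            F_Mid hsem hreset hm htm1 htm2 htm3
          subst hz1
          refine ⟨d, z', y, t, by simp, htr, ?_⟩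
          rcases mid_Mde (M := M) y with hy | hy
          · have hq : Hd M (.seq (.signal (sg t) (Mde M y)) m₂) t (y ++ z') _ :=
              Hd.stepL (Hd.base t hy) hm₂
            cases b₁ with
            | true => exact Or.inl ⟨rfl, hq⟩
            | false => exact Or.inr ⟨rfl, Or.inl hq⟩
          · cases b₁ with
            | true =>
                exact Or.inl ⟨rfl, Hd.stepD _ _ _ (Hd.base t (hy z')) hm₂⟩
            | false =>
                refine Or.inr ⟨rfl, Or.inr fun rest => ?_⟩
                have := Hd.stepD _ _ _ (Hd.base t (hy (z' ++ rest))) hm₂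
                simpa [List.append_assoc] using this
      | cons d z₀' =>
          have hdP : d ∈ PopSet M := head_live_Hd hp d z₀' rfl rfl
          rcases (tSeq hsem _ _ _ _ _ _).mp h1 with ⟨r₁, ht₁, rfl, _⟩ | ⟨_, hno, _⟩
          · rcases (tSeq hsem _ _ _ _ _ _).mp h2 with ⟨r₂, ht₂, heq, _⟩ | ⟨_, hno, _⟩
            · rw [SExpr.seq.injEq] at heq
              obtain ⟨heq1, -⟩ := heq
              subst heq1
              rcases (tSeq hsem _ _ _ _ _ _).mp h3 with ⟨r₃, ht₃, heq, _⟩ | ⟨_, _, ht₃⟩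
              · rw [SExpr.seq.injEq] at heq
                obtain ⟨heq1, -⟩ := heq
                subst heq1
                obtain ⟨d', z₂', y, t, hzz, htr, hfl⟩ := ih a _ ht₁ ht₂ ht₃
                rw [List.cons.injEq] at hzz
                obtain ⟨rfl, rfl⟩ := hzz
                rcases hfl with ⟨hb, -⟩ | ⟨-, hq⟩
                · exact absurd hb (by simp)
                refine ⟨d, z₀' ++ z₁, y, t, by simp, htr, ?_⟩
                rcases hq with hq | hall
                · have hstep := Hd.stepL (M := M) hq hm
                  rw [List.append_assoc] at hstep
                  cases b₁ with
                  | true => exact Or.inl ⟨rfl, hstep⟩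
                  | false => exact Or.inr ⟨rfl, Or.inl hstep⟩
                · cases b₁ with
                  | true =>
                      refine Or.inl ⟨rfl, ?_⟩
                      have := Hd.stepD _ _ _ (hall z₁) hm
                      simpa [List.append_assoc] using this
                  | false =>
                      refine Or.inr ⟨rfl, Or.inr fun rest => ?_⟩
                      have := Hd.stepD _ _ _ (hall (z₁ ++ rest)) hm
                      simpa [List.append_assoc] using this
              · rcases shape_Mid hsem hreset hm ht₃ with h' | h' | ⟨r₄, m₄, h', hs⟩
                · exact absurd h' (by simp)
                · exact absurd h' (by simp)
                · rw [SExpr.seq.injEq] at h'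
                  obtain ⟨-, h''⟩ := h'
                  subst h''
                  omega
            · obtain ⟨a', q', ht', -⟩ := ex_Hd hsem hreset hp d z₀' rfl hdP vF sg_vF
              exact absurd ht' (hno a' q' vT)
          · obtain ⟨a', q', ht', -⟩ := ex_Hd hsem hreset hp d z₀' rfl hdP vT sg_vT
            exact absurd ht' (hno a' q' vT)

end Sem18e
section Sem18f
open Classical

variable {S A D : Type} {M : PDA S A D} {hfin : M.Tr.Finite}
variable {effect : A → Val S → Val S} {Ac Co : ES M → Val S → Prop}
  {T : ES M → Val S → A → ES M → Val S → Prop}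
variable (hsem : IsSem (Del M hfin) effect Ac Co T)
variable (hreset : ∀ a v, effect a v = fun _ => true)

lemma sg_split {w : S} {v : Val S} (h : sg w v = true) :
    v w = true ∨ ∀ s, v s = false := by
  simpa [sg, Bool.or_eq_true, decide_eq_true_eq] using h

include hsem hreset

lemma B_Mid {m : ES M} {z b} (h : Mid M m z b) {w d z₂ a y t} (hz : z = d :: z₂)
    (htr : (w, a, some d, y, t) ∈ M.Tr) :
    ∃ m₂, Mid M m₂ z₂ b ∧
      (∀ v, sg w v = true → T m v a (.seq (.signal (sg t) (Mde M y)) m₂) vT) := by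
  cases h with
  | one => simp at hz
  | dead d₀ z₀ hd₀ =>
      rw [List.cons.injEq] at hz
      exact absurd ⟨w, a, y, t, hz.1 ▸ htr⟩ hd₀
  | @cons dd m₂ z₃ b₃ hm =>
      rw [List.cons.injEq] at hz
      obtain ⟨hd1, rfl⟩ := hz
      refine ⟨m₂, hm, fun v hv => ?_⟩
      refine (tSeq hsem _ _ _ _ _ _).mpr (Or.inl ⟨.signal (sg t) (Mde M y), ?_, rfl, ?_⟩)
      · exact (tXd hsem hreset dd v a _ vT).mpr ⟨w, y, t, hd1 ▸ htr, hv, rfl, rfl⟩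
      · exact co_seq_of hsem ((coSig hsem _ _ _).mpr ⟨sg_vT t, co_Mde hsem y vT⟩)
          (co_Mid hsem hm vT)

lemma B_Hd {p : ES M} {w z b} (h : Hd M p w z b) :
    ∀ d z₂ a y t, z = d :: z₂ → (w, a, some d, y, t) ∈ M.Tr →
    ∃ r, (∀ v, sg w v = true → T p v a r vT) ∧ Co r vT ∧
      ((b = true ∧ Hd M r t (y ++ z₂) true) ∨
       (b = false ∧ (Hd M r t (y ++ z₂) false ∨
          ∀ rest, Hd M r t (y ++ z₂ ++ rest) true))) := by
  induction h with
  | @base m₀ zz bb w hm =>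
      intro d z₂ a y t hz htr
      obtain ⟨m₂, hm₂, hT⟩ := B_Mid hsem hreset hm hz htr
      refine ⟨.seq (.signal (sg t) (Mde M y)) m₂,
        fun v hv => (tSig hsem _ _ _ _ _ _).mpr ⟨hv, hT v hv⟩,
        co_seq_of hsem ((coSig hsem _ _ _).mpr ⟨sg_vT t, co_Mde hsem y vT⟩)
          (co_Mid hsem hm₂ vT), ?_⟩
      rcases mid_Mde (M := M) y with hy | hy
      · have hq : Hd M (.seq (.signal (sg t) (Mde M y)) m₂) t (y ++ z₂) bb :=
          Hd.stepL (Hd.base t hy) hm₂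
        cases bb with
        | true => exact Or.inl ⟨rfl, hq⟩
        | false => exact Or.inr ⟨rfl, Or.inl hq⟩
      · cases bb with
        | true => exact Or.inl ⟨rfl, Hd.stepD _ _ _ (Hd.base t (hy z₂)) hm₂⟩
        | false =>
            refine Or.inr ⟨rfl, Or.inr fun rest => ?_⟩
            have := Hd.stepD _ _ _ (Hd.base t (hy (z₂ ++ rest))) hm₂
            simpa [List.append_assoc] using this
  | @stepD p₀ w₀ z₀ m z₁ b₁ hp hm ih =>
      intro d z₂ a y t hz htr
      obtain ⟨r, hT, hc, hfl⟩ := ih d z₂ a y t hz htr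
      rcases hfl with ⟨-, hq⟩ | ⟨hb, -⟩
      · have hc' := co_seq_of hsem hc (co_Mid hsem hm vT)
        exact ⟨.seq r m, fun v hv => (tSeq hsem _ _ _ _ _ _).mpr
          (Or.inl ⟨r, hT v hv, rfl, hc'⟩), hc',
          Or.inl ⟨rfl, Hd.stepD _ _ _ hq hm⟩⟩
      · exact absurd hb (by simp)
  | @stepL p₀ w₀ z₀ m z₁ b₁ hp hm ih =>
      intro d z₂ a y t hz htr
      cases z₀ with
      | nil =>
          simp only [List.nil_append] at hz
          obtain ⟨m₂, hm₂, hT⟩ := B_Mid hsem hreset hm hz htr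
          refine ⟨.seq (.signal (sg t) (Mde M y)) m₂,
            fun v hv => (tSeq hsem _ _ _ _ _ _).mpr (Or.inr
              ⟨(ac_Hd hsem hp v).mpr ⟨hv, Or.inl rfl⟩,
               noT_fin hsem hp rfl rfl v, hT v hv⟩),
            co_seq_of hsem ((coSig hsem _ _ _).mpr ⟨sg_vT t, co_Mde hsem y vT⟩)
              (co_Mid hsem hm₂ vT), ?_⟩
          rcases mid_Mde (M := M) y with hy | hy
          · have hq : Hd M (.seq (.signal (sg t) (Mde M y)) m₂) t (y ++ z₂) b₁ :=
              Hd.stepL (Hd.base t hy) hm₂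
            cases b₁ with
            | true => exact Or.inl ⟨rfl, hq⟩
            | false => exact Or.inr ⟨rfl, Or.inl hq⟩
          · cases b₁ with
            | true => exact Or.inl ⟨rfl, Hd.stepD _ _ _ (Hd.base t (hy z₂)) hm₂⟩
            | false =>
                refine Or.inr ⟨rfl, Or.inr fun rest => ?_⟩
                have := Hd.stepD _ _ _ (Hd.base t (hy (z₂ ++ rest))) hm₂
                simpa [List.append_assoc] using this
      | cons e z₀' =>
          rw [List.cons_append, List.cons.injEq] at hz
          obtain ⟨rfl, rfl⟩ := hz
          obtain ⟨r, hT, hc, hfl⟩ := ih e z₀' a y t rfl htr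
          rcases hfl with ⟨hb, -⟩ | ⟨-, hq⟩
          · exact absurd hb (by simp)
          have hc' := co_seq_of hsem hc (co_Mid hsem hm vT)
          refine ⟨.seq r m, fun v hv => (tSeq hsem _ _ _ _ _ _).mpr
            (Or.inl ⟨r, hT v hv, rfl, hc'⟩), hc', ?_⟩
          rcases hq with hq | hall
          · have hstep := Hd.stepL (M := M) hq hm
            rw [List.append_assoc] at hstep
            cases b₁ with
            | true => exact Or.inl ⟨rfl, hstep⟩
            | false => exact Or.inr ⟨rfl, Or.inl hstep⟩
          · cases b₁ with
            | true =>
                refine Or.inl ⟨rfl, ?_⟩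
                have := Hd.stepD _ _ _ (hall z₁) hm
                simpa [List.append_assoc] using this
            | false =>
                refine Or.inr ⟨rfl, Or.inr fun rest => ?_⟩
                have := Hd.stepD _ _ _ (hall (z₁ ++ rest)) hm
                simpa [List.append_assoc] using this

lemma F_Kont {qb : ES M} {x} (hk : Kont M qb x) {w a q}
    (h1 : T qb vT a q vT) (h2 : T qb vF a q vT) (h3 : T qb (vI w) a q vT) :
    ∃ t x', M.step (w, x) a (t, x') ∧ RelC M q t x' := by
  cases hk with
  | eps =>
      rcases (tXe hsem hreset (vI w) a q vT).mp h3 with ⟨s, y, t, htr, hsg, rfl, -⟩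
      rw [sg_vI] at hsg
      subst hsg
      exact ⟨t, y, htr, RelC.tl t (kont_Tl y)⟩
  | dead d x₀ hd =>
      rcases (tY hsem hreset vT a q vT).mp h1 with ⟨_, _, ⟨_, rfl⟩ | ⟨hc, _⟩⟩
      · rcases (tY hsem hreset vF a _ vT).mp h2 with ⟨_, _, ⟨hc2, _⟩ | ⟨_, h2'⟩⟩
        · rw [chi_vF w] at hc2; simp at hc2
        · simp at h2'
      · rw [chi_vT] at hc; simp at hc
  | @cons dd q₁ x₁ hk₁ =>
      obtain ⟨s₀, a₀, y₀, t₀, htr₀⟩ := dd.2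
      rcases (tSeq hsem _ _ _ _ _ _).mp h1 with ⟨r₁, ht₁, rfl, _⟩ | ⟨_, hno, _⟩
      · rcases (tSeq hsem _ _ _ _ _ _).mp h3 with ⟨r₂, ht₂, heq, _⟩ | ⟨_, _, ht₃⟩
        · rw [SExpr.seq.injEq] at heq
          obtain ⟨heq1, -⟩ := heq
          subst heq1
          rcases (tXd hsem hreset dd (vI w) a _ vT).mp ht₂ with ⟨s, y, t, htr, hsg, rfl, -⟩
          rw [sg_vI] at hsg
          subst hsg
          refine ⟨t, y ++ x₁, ⟨y, rfl, htr⟩, ?_⟩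
          rcases mid_Mde (M := M) y with hy | hy
          · exact RelC.midL (Hd.base t hy) hk₁
          · exact RelC.midD (Hd.base t (hy x₁)) hk₁
        · rcases shape_Kont hsem hreset hk₁ ht₃ with h' | h' | ⟨φ', m', h'⟩ | ⟨r₄, q₄, h', hs⟩
          · exact absurd h' (by simp)
          · exact absurd h' (by simp)
          · exact absurd h' (by simp)
          · rw [SExpr.seq.injEq] at h'
            obtain ⟨-, h''⟩ := h'
            subst h''
            omega
      · exact absurd ((tXd hsem hreset dd vT a₀ _ vT).mpr
          ⟨s₀, y₀, t₀, htr₀, sg_vT s₀, rfl, rfl⟩) (hno a₀ _ vT)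

lemma fwdRel {p : ES M} {w x} (h : RelC M p w x) {a q}
    (hT : ∀ v, Co p v → T p v a q (effect a v)) :
    ∃ t x', M.step (w, x) a (t, x') ∧ RelC M q t x' := by
  have hT' : ∀ v, sg w v = true → T p v a q vT := by
    intro v hv
    have := hT v ((co_RelC hsem h v).mpr hv)
    rw [hreset] at this
    exact this
  have h1 := hT' vT (sg_vT w)
  have h2 := hT' vF (sg_vF w)
  have h3 := hT' (vI w) (sg_self_vI w)
  cases h with
  | tl w hk =>
      exact F_Kont hsem hreset hk ((tSig hsem _ _ _ _ _ _).mp h1).2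
        ((tSig hsem _ _ _ _ _ _).mp h2).2 ((tSig hsem _ _ _ _ _ _).mp h3).2
  | @midL p₀ w₀ z₀ qb x₀ hp hk =>
      cases z₀ with
      | nil =>
          have hno := noT_fin hsem hp rfl rfl
          rcases (tSeq hsem _ _ _ _ _ _).mp h1 with ⟨r₁, ht₁, _, _⟩ | ⟨_, _, htm1⟩
          · exact absurd ht₁ (hno vT a r₁ vT)
          rcases (tSeq hsem _ _ _ _ _ _).mp h2 with ⟨r₂, ht₂, _, _⟩ | ⟨_, _, htm2⟩
          · exact absurd ht₂ (hno vF a r₂ vT)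
          rcases (tSeq hsem _ _ _ _ _ _).mp h3 with ⟨r₃, ht₃, _, _⟩ | ⟨_, _, htm3⟩
          · exact absurd ht₃ (hno (vI w) a r₃ vT)
          simpa using F_Kont hsem hreset hk htm1 htm2 htm3
      | cons d z₀' =>
          have hdP : d ∈ PopSet M := head_live_Hd hp d z₀' rfl rfl
          rcases (tSeq hsem _ _ _ _ _ _).mp h1 with ⟨r₁, ht₁, rfl, _⟩ | ⟨_, hno, _⟩
          · rcases (tSeq hsem _ _ _ _ _ _).mp h2 with ⟨r₂, ht₂, heq, _⟩ | ⟨_, hno, _⟩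
            · rw [SExpr.seq.injEq] at heq
              obtain ⟨heq1, -⟩ := heq
              subst heq1
              rcases (tSeq hsem _ _ _ _ _ _).mp h3 with ⟨r₃, ht₃, heq, _⟩ | ⟨_, _, ht₃⟩
              · rw [SExpr.seq.injEq] at heq
                obtain ⟨heq1, -⟩ := heq
                subst heq1
                obtain ⟨d', z₂', y, t, hzz, htr, hfl⟩ :=
                  F_Hd hsem hreset hp a _ ht₁ ht₂ ht₃
                rw [List.cons.injEq] at hzz
                obtain ⟨rfl, rfl⟩ := hzz
                rcases hfl with ⟨hb, -⟩ | ⟨-, hq⟩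
                · exact absurd hb (by simp)
                refine ⟨t, y ++ (z₀' ++ x₀), ⟨y, rfl, htr⟩, ?_⟩
                rcases hq with hq | hall
                · have := RelC.midL hq hk
                  rwa [List.append_assoc] at this
                · have := RelC.midD (hall x₀) hk
                  rwa [List.append_assoc] at this
              · rcases shape_Kont hsem hreset hk ht₃ with h' | h' | ⟨φ', m', h'⟩ | ⟨r₄, q₄, h', hs⟩
                · exact absurd h' (by simp)
                · exact absurd h' (by simp)
                · exact absurd h' (by simp)
                · rw [SExpr.seq.injEq] at h'
                  obtain ⟨-, h''⟩ := h'
                  subst h''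
                  omega
            · obtain ⟨a', q', ht', -⟩ := ex_Hd hsem hreset hp d z₀' rfl hdP vF sg_vF
              exact absurd ht' (hno a' q' vT)
          · obtain ⟨a', q', ht', -⟩ := ex_Hd hsem hreset hp d z₀' rfl hdP vT sg_vT
            exact absurd ht' (hno a' q' vT)
  | @midD p₀ w₀ z₀ qb x₀ hp hk =>
      obtain ⟨d, z₂, rfl⟩ := List.exists_cons_of_ne_nil (hd_ne_nil hp)
      by_cases hdP : d ∈ PopSet M
      · rcases (tSeq hsem _ _ _ _ _ _).mp h1 with ⟨r₁, ht₁, rfl, _⟩ | ⟨_, hno, _⟩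
        · rcases (tSeq hsem _ _ _ _ _ _).mp h2 with ⟨r₂, ht₂, heq, _⟩ | ⟨_, hno, _⟩
          · rw [SExpr.seq.injEq] at heq
            obtain ⟨heq1, -⟩ := heq
            subst heq1
            rcases (tSeq hsem _ _ _ _ _ _).mp h3 with ⟨r₃, ht₃, heq, _⟩ | ⟨_, _, ht₃⟩
            · rw [SExpr.seq.injEq] at heq
              obtain ⟨heq1, -⟩ := heq
              subst heq1
              obtain ⟨d', z₂', y, t, hzz, htr, hfl⟩ :=
                F_Hd hsem hreset hp a _ ht₁ ht₂ ht₃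
              rw [List.cons.injEq] at hzz
              obtain ⟨rfl, rfl⟩ := hzz
              rcases hfl with ⟨-, hq⟩ | ⟨hb, -⟩
              · exact ⟨t, y ++ z₂, ⟨y, rfl, htr⟩, RelC.midD hq hk⟩
              · exact absurd hb (by simp)
            · rcases shape_Kont hsem hreset hk ht₃ with h' | h' | ⟨φ', m', h'⟩ | ⟨r₄, q₄, h', hs⟩
              · exact absurd h' (by simp)
              · exact absurd h' (by simp)
              · exact absurd h' (by simp)
              · rw [SExpr.seq.injEq] at h'
                obtain ⟨-, h''⟩ := h'
                subst h''
                omega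
          · obtain ⟨a', q', ht', -⟩ := ex_Hd hsem hreset hp d z₂ rfl hdP vF sg_vF
            exact absurd ht' (hno a' q' vT)
        · obtain ⟨a', q', ht', -⟩ := ex_Hd hsem hreset hp d z₂ rfl hdP vT sg_vT
          exact absurd ht' (hno a' q' vT)
      · exfalso
        rcases (tSeq hsem _ _ _ _ _ _).mp h1 with ⟨r₁, ht₁, rfl, _⟩ | ⟨_, hno, htm⟩
        · rcases (tSeq hsem _ _ _ _ _ _).mp h2 with ⟨r₂, ht₂, heq, _⟩ | ⟨_, hno, htm⟩
          · rw [SExpr.seq.injEq] at heq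
            obtain ⟨heq1, -⟩ := heq
            subst heq1
            exact F_dead hsem hreset hp d z₂ rfl hdP a _ ht₁ ht₂
          · obtain ⟨a', r', ht'⟩ := exY_Hd hsem hreset hp d z₂ rfl hdP
              (trne_Kont hsem hreset hk htm) vF sg_vF
            exact hno a' r' vT ht'.1
        · obtain ⟨a', r', ht'⟩ := exY_Hd hsem hreset hp d z₂ rfl hdP
            (trne_Kont hsem hreset hk htm) vT sg_vT
          exact hno a' r' vT ht'.1

lemma bwdRel {p : ES M} {w x} (h : RelC M p w x) {a t x'}
    (hstep : M.step (w, x) a (t, x')) :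
    ∃ q, (∀ v, Co p v → T p v a q (effect a v)) ∧ RelC M q t x' := by
  cases h with
  | tl w hk =>
      cases hk with
      | eps =>
          have htr : (w, a, none, x', t) ∈ M.Tr := hstep
          refine ⟨.signal (sg t) (Tl M x'), fun v hv => ?_, RelC.tl t (kont_Tl x')⟩
          rw [hreset]
          have hsg := (co_RelC hsem (RelC.tl w Kont.eps) v).mp hv
          exact (tSig hsem _ _ _ _ _ _).mpr ⟨hsg,
            (tXe hsem hreset v a _ _).mpr ⟨w, x', t, htr, hsg, rfl, rfl⟩⟩
      | dead d x₀ hd =>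
          obtain ⟨y, rfl, htr⟩ := hstep
          exact absurd ⟨w, a, y, t, htr⟩ hd
      | @cons dd q₁ x₁ hk₁ =>
          obtain ⟨y, rfl, htr⟩ := hstep
          refine ⟨.seq (.signal (sg t) (Mde M y)) q₁, fun v hv => ?_, ?_⟩
          · rw [hreset]
            have hsg := (co_RelC hsem (RelC.tl w (Kont.cons dd hk₁)) v).mp hv
            refine (tSig hsem _ _ _ _ _ _).mpr ⟨hsg,
              (tSeq hsem _ _ _ _ _ _).mpr (Or.inl ⟨.signal (sg t) (Mde M y), ?_, rfl, ?_⟩)⟩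
            · exact (tXd hsem hreset dd v a _ vT).mpr ⟨w, y, t, htr, hsg, rfl, rfl⟩
            · exact co_seq_of hsem ((coSig hsem _ _ _).mpr ⟨sg_vT t, co_Mde hsem y vT⟩)
                (co_Kont hsem hk₁ vT)
          · rcases mid_Mde (M := M) y with hy | hy
            · exact RelC.midL (Hd.base t hy) hk₁
            · exact RelC.midD (Hd.base t (hy x₁)) hk₁
  | @midL p₀ w₀ z₀ qb x₀ hp hk =>
      cases z₀ with
      | nil =>
          rw [List.nil_append] at hstep
          cases hk with
          | eps =>
              have htr : (w, a, none, x', t) ∈ M.Tr := hstep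
              refine ⟨.signal (sg t) (Tl M x'), fun v hv => ?_, RelC.tl t (kont_Tl x')⟩
              rw [hreset]
              have hsg := (co_RelC hsem (RelC.midL hp Kont.eps) v).mp hv
              refine (tSeq hsem _ _ _ _ _ _).mpr (Or.inr
                ⟨(ac_Hd hsem hp v).mpr ⟨hsg, Or.inl rfl⟩,
                 noT_fin hsem hp rfl rfl v,
                 (tXe hsem hreset v a _ _).mpr ⟨w, x', t, htr, hsg, rfl, rfl⟩⟩)
          | dead d x₁ hd =>
              obtain ⟨y, rfl, htr⟩ := hstep
              exact absurd ⟨w, a, y, t, htr⟩ hd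
          | @cons dd q₁ x₁ hk₁ =>
              obtain ⟨y, rfl, htr⟩ := hstep
              refine ⟨.seq (.signal (sg t) (Mde M y)) q₁, fun v hv => ?_, ?_⟩
              · rw [hreset]
                have hsg := (co_RelC hsem (RelC.midL hp (Kont.cons dd hk₁)) v).mp hv
                refine (tSeq hsem _ _ _ _ _ _).mpr (Or.inr
                  ⟨(ac_Hd hsem hp v).mpr ⟨hsg, Or.inl rfl⟩,
                   noT_fin hsem hp rfl rfl v, ?_⟩)
                refine (tSeq hsem _ _ _ _ _ _).mpr (Or.inl
                  ⟨.signal (sg t) (Mde M y), ?_, rfl, ?_⟩)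
                · exact (tXd hsem hreset dd v a _ vT).mpr ⟨w, y, t, htr, hsg, rfl, rfl⟩
                · exact co_seq_of hsem ((coSig hsem _ _ _).mpr ⟨sg_vT t, co_Mde hsem y vT⟩)
                    (co_Kont hsem hk₁ vT)
              · rcases mid_Mde (M := M) y with hy | hy
                · exact RelC.midL (Hd.base t hy) hk₁
                · exact RelC.midD (Hd.base t (hy x₁)) hk₁
      | cons e z₀' =>
          rw [List.cons_append] at hstep
          obtain ⟨y, rfl, htr⟩ := hstep
          obtain ⟨r, hT, hc, hfl⟩ := B_Hd hsem hreset hp e z₀' a y t rfl htr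
          rcases hfl with ⟨hb, -⟩ | ⟨-, hq⟩
          · exact absurd hb (by simp)
          refine ⟨.seq r qb, fun v hv => ?_, ?_⟩
          · rw [hreset]
            have hsg := (co_RelC hsem (RelC.midL hp hk) v).mp hv
            exact (tSeq hsem _ _ _ _ _ _).mpr (Or.inl ⟨r, hT v hsg, rfl,
              co_seq_of hsem hc (co_Kont hsem hk vT)⟩)
          · rcases hq with hq | hall
            · have := RelC.midL hq hk
              rwa [List.append_assoc] at this
            · have := RelC.midD (hall x₀) hk
              rwa [List.append_assoc] at this
  | @midD p₀ w₀ z₀ qb x₀ hp hk =>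
      obtain ⟨d, z₂, rfl⟩ := List.exists_cons_of_ne_nil (hd_ne_nil hp)
      obtain ⟨y, rfl, htr⟩ := hstep
      obtain ⟨r, hT, hc, hfl⟩ := B_Hd hsem hreset hp d z₂ a y t rfl htr
      rcases hfl with ⟨-, hq⟩ | ⟨hb, -⟩
      · refine ⟨.seq r qb, fun v hv => ?_, RelC.midD hq hk⟩
        rw [hreset]
        have hsg := (co_RelC hsem (RelC.midD hp hk) v).mp hv
        exact (tSeq hsem _ _ _ _ _ _).mpr (Or.inl ⟨r, hT v hsg, rfl,
          co_seq_of hsem hc (co_Kont hsem hk vT)⟩)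
      · exact absurd hb (by simp)

lemma accRel {p : ES M} {w x} (h : RelC M p w x) :
    ((∃ v, Co p v) ∧ ∀ v, Co p v → Ac p v) ↔ w ∈ M.final := by
  constructor
  · rintro ⟨-, hac⟩
    have := hac (vI w) ((co_RelC hsem h _).mpr (sg_self_vI w))
    exact (phiF_vI w).mp ((ac_RelC hsem h _).mp this).2
  · intro hw
    refine ⟨⟨vT, (co_RelC hsem h vT).mpr (sg_vT w)⟩, fun v hv => ?_⟩
    have hsg := (co_RelC hsem h v).mp hv
    exact (ac_RelC hsem h v).mpr ⟨hsg, phiF_mono hw (sg_split hsg)⟩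

end Sem18f
lemma popset_finite {S A D : Type} {M : PDA S A D} (hfin : M.Tr.Finite) :
    (PopSet M).Finite := by
  have h1 : PopSet M ⊆ Option.some ⁻¹'
      ((fun tr : S × A × Option D × List D × S => tr.2.2.1) '' M.Tr) := by
    rintro d ⟨s, a, y, t, htr⟩
    exact ⟨(s, a, some d, y, t), htr, rfl⟩
  exact Set.Finite.subset ((hfin.image _).preimage (Option.some_injective D).injOn) h1

/-- for every pushdown automaton `M` there is a guarded
sequential recursive specification with propositional signals and conditions
(one propositional variable per state of `M`, effect function with the reset
property) whose process graph is bisimilar to the process graph of `M`. -/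
theorem pda_has_spec_with_signals_and_conditions (S A D : Type) (M : PDA S A D)
    (hfin : M.Tr.Finite)
    (effect : A → Val S → Val S) (hreset : ∀ a v, effect a v = fun _ => true) :
    ∃ (V : Type) (Δ : V → SExpr A S V) (X₀ : V), Finite V ∧
      (∀ X, SGuarded (Δ X)) ∧
      ∀ Ac Co T, IsSem Δ effect Ac Co T →
        Bisimilar2 (vfLTS effect Ac Co T) M.lts (.var X₀) (M.init, []) := by
  classical
  haveI := (popset_finite hfin).fintype
  haveI hfinV : Finite (VS M) := Finite.of_fintype _
  refine ⟨VS M, Del M hfin, vX0 M, hfinV, Del_guarded M hfin, ?_⟩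
  intro Ac Co T hsem
  refine ⟨fun p c => (p = .var (vX0 M) ∧ c = (M.init, [])) ∨ RelC M p c.1 c.2,
    ?_, Or.inl ⟨rfl, rfl⟩⟩
  intro p c hR
  rcases hR with ⟨rfl, rfl⟩ | hrel
  · refine ⟨?_, ?_, ?_⟩
    · rintro a p' ⟨-, hT⟩
      have h1 := hT vT (coX0 hsem vT)
      rw [hreset] at h1
      rcases (tX0 hsem hreset vT a p' _).mp h1 with ⟨y, t, htr, rfl, -⟩
      exact ⟨(t, y), htr, Or.inr (RelC.tl t (kont_Tl y))⟩
    · rintro a c' hstep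
      have htr : (M.init, a, none, c'.2, c'.1) ∈ M.Tr := hstep
      refine ⟨.signal (sg c'.1) (Tl M c'.2), ⟨⟨vT, coX0 hsem vT⟩, fun v _ => ?_⟩,
        Or.inr (RelC.tl c'.1 (kont_Tl c'.2))⟩
      rw [hreset]
      exact (tX0 hsem hreset v a _ _).mpr ⟨c'.2, c'.1, htr, rfl, rfl⟩
    · constructor
      · rintro ⟨-, hac⟩
        exact (acX0 hsem vT).mp (hac vT (coX0 hsem vT))
      · intro hf
        exact ⟨⟨vT, coX0 hsem vT⟩, fun v _ => (acX0 hsem v).mpr hf⟩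
  · refine ⟨?_, ?_, accRel hsem hreset hrel⟩
    · rintro a p' ⟨-, hT⟩
      obtain ⟨t, x', hstep, hrel'⟩ := fwdRel hsem hreset hrel hT
      exact ⟨(t, x'), hstep, Or.inr hrel'⟩
    · rintro a c' hstep
      obtain ⟨q, hT, hrel'⟩ := bwdRel hsem hreset hrel (t := c'.1) (x' := c'.2) hstep
      exact ⟨q, ⟨⟨vT, (co_RelC hsem hrel vT).mpr (sg_vT _)⟩, hT⟩, Or.inr hrel'⟩
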